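/- arXiv:2407.11331 — 3 statements merged into one kernel-verified Lean document; each statement's English description precedes it below -/
import Mathlib

section
/- Let B be a 1-unconditional convex body in ℝ^n and let x ∈ ∂B. Then every direction d ∈ ℝ^n with 𝒵_d = 𝒵_x and d_i·x_i < 0 for all i ∉ 𝒵_x illuminates x. Consequently, the set {−1,0,1}^n ∖ {0} illuminates B; and if B is cubelike, then the set {−1,1}^n illuminates B, so that 𝕀(B) ≤ 2^n. -/
open Set

/-- A convex body in `ℝ^n`: a compact convex set with nonempty interior. -/
def IsConvexBody {n : ℕ} (K : Set (Fin n → ℝ)) : Prop :=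
  Convex ℝ K ∧ IsCompact K ∧ (interior K).Nonempty

/-- `K` is 1-unconditional: closed under sign changes of the coordinates. -/
def Unconditional {n : ℕ} (K : Set (Fin n → ℝ)) : Prop :=
  ∀ x ∈ K, ∀ ε : Fin n → ℝ, (∀ i, ε i = 1 ∨ ε i = -1) → (fun i => ε i * x i) ∈ K

/-- The direction `d` illuminates the (boundary) point `x` of `K`. -/
def Illuminates {n : ℕ} (K : Set (Fin n → ℝ)) (d x : Fin n → ℝ) : Prop :=
  ∃ ε : ℝ, 0 < ε ∧ x + ε • d ∈ interior K

/-- The set of directions `D` illuminates every boundary point of `K`. -/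
def IlluminatesSet {n : ℕ} (K : Set (Fin n → ℝ)) (D : Set (Fin n → ℝ)) : Prop :=
  ∀ x ∈ frontier K, ∃ d ∈ D, Illuminates K d x

/-- The illumination number: smallest cardinality of a set of nonzero directions
illuminating `K`. -/
noncomputable def illumNumber {n : ℕ} (K : Set (Fin n → ℝ)) : ℕ :=
  sInf {m | ∃ D : Finset (Fin n → ℝ), D.card = m ∧ (∀ d ∈ D, d ≠ 0) ∧
    IlluminatesSet K ↑D}

/-- A parallelepiped: an affine image of the cube `[-1,1]^n`. -/
def IsParallelepiped {n : ℕ} (K : Set (Fin n → ℝ)) : Prop :=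
  ∃ T : (Fin n → ℝ) ≃ᵃ[ℝ] (Fin n → ℝ),
    K = T '' (Set.Icc (fun _ => (-1 : ℝ)) (fun _ => 1))

/-- The standard basis vector `e i`. -/
def stdB {n : ℕ} (i : Fin n) : Fin n → ℝ := Pi.single i 1

/-- The class `𝒰^n`: 1-unconditional convex bodies all of whose standard basis
vectors lie on the boundary. -/
def memU {n : ℕ} (K : Set (Fin n → ℝ)) : Prop :=
  IsConvexBody K ∧ Unconditional K ∧ ∀ i : Fin n, stdB i ∈ frontier K

/-- A 1-unconditional body is cubelike if all its extreme points have all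
coordinates nonzero. -/
def Cubelike {n : ℕ} (K : Set (Fin n → ℝ)) : Prop :=
  ∀ x ∈ Set.extremePoints ℝ K, ∀ i, x i ≠ 0

/-- The all-ones vector `𝟙`. -/
def allOnes {n : ℕ} : Fin n → ℝ := fun _ => 1

/-!
If `x ∈ ∂B` and `d` has the zero pattern of `x` with opposite signs, then for small `ε > 0` every
coordinate of `x + ε d` is either zero or strictly smaller in modulus than that of `x`. An
unconditional convex body is solid (it contains every `z` with `|zᵢ| ≤ |wᵢ|` for some `w ∈ B`) and
has `0` in its interior, so such a point is `s • y` with `y ∈ B` and `s < 1`, hence interior.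

For a cubelike body, Minkowski's theorem writes `x = ∑ λₖ eₖ` with extreme points `eₖ`, and
`w = ∑ λₖ |eₖ|` lies in `B`, dominates `|x|` and has no zero coordinate. So `x + ε d` may also
move along the coordinates where `x` vanishes, and the sign vector `d = -sign x` (with `+1` on the
zeros of `x`) illuminates `x`.
-/

open Filter Topology Module

section Minkowski

lemma image_extremePoints_subset_of_injective {𝕜 E F : Type*} [Ring 𝕜] [PartialOrder 𝕜]
    [AddRightMono 𝕜] [AddCommGroup E] [AddCommGroup F] [Module 𝕜 E] [Module 𝕜 F]
    (f : E →ᵃ[𝕜] F) (hf : Function.Injective f) (s : Set E) :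
    f '' s.extremePoints 𝕜 ⊆ (f '' s).extremePoints 𝕜 := by
  rintro _ ⟨e, he, rfl⟩
  refine ⟨mem_image_of_mem f he.1, ?_⟩
  rintro _ ⟨a, ha, rfl⟩ _ ⟨b, hb, rfl⟩ hab
  obtain ⟨m, hm, hme⟩ := (image_openSegment 𝕜 f a b).symm ▸ hab
  rw [hf hme] at hm
  rw [he.2 ha hb hm]

variable {E : Type*} [NormedAddCommGroup E] [NormedSpace ℝ E]

lemma exists_nonneg_add_smul_mem_diff_interior {s : Set E} (hs : IsCompact s) {x v : E}
    (hx : x ∈ s) (hv : v ≠ 0) : ∃ t : ℝ, 0 ≤ t ∧ x + t • v ∈ s \ interior s := by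
  let g : ℝ → E := fun t => x + t • v
  have hg : Topology.IsClosedEmbedding g :=
    (Homeomorph.addLeft x).isClosedEmbedding.comp (isClosedEmbedding_smul_left hv)
  obtain ⟨t, ⟨ht0, hts⟩, htmax⟩ :=
    ((hg.isCompact_preimage hs).inter_left isClosed_Ici).exists_isGreatest
      ⟨0, self_mem_Ici, by simpa [g] using hx⟩
  refine ⟨t, ht0, hts, fun hti => ?_⟩
  have hnear : ∀ᶠ r in 𝓝 t, g r ∈ interior s :=
    hg.continuous.continuousAt (isOpen_interior.mem_nhds hti)
  obtain ⟨r, hrs, htr⟩ :=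
    ((hnear.filter_mono nhdsWithin_le_nhds).and (self_mem_nhdsWithin (s := Ioi t))).exists
  exact (htmax ⟨ht0.trans htr.le, interior_subset (s := s) hrs⟩).not_gt htr

lemma self_mem_segment_add_smul_sub_smul (x v : E) {a b : ℝ} (ha : 0 ≤ a) (hb : 0 ≤ b) :
    x ∈ segment ℝ (x + a • v) (x - b • v) := by
  rw [mem_segment_iff_sameRay, sub_add_cancel_left, sub_sub_cancel_left, ← smul_neg, ← smul_neg]
  exact (SameRay.sameRay_nonneg_smul_left _ ha).nonneg_smul_right hb

lemma exists_ne_zero_mem_toExposed {s : Set E} (hc : Convex ℝ s) (hint : (interior s).Nonempty)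
    {p : E} (hp : p ∈ s) (hpi : p ∉ interior s) :
    ∃ l : StrongDual ℝ E, l ≠ 0 ∧ p ∈ l.toExposed s := by
  obtain ⟨l, hl⟩ := geometric_hahn_banach_open_point hc.interior isOpen_interior hpi
  obtain ⟨a, ha⟩ := hint
  refine ⟨l, fun h => by simpa [h] using hl a ha, hp, fun y hy => ?_⟩
  have : closure (interior s) ⊆ {z | l z ≤ l p} :=
    closure_minimal (fun z hz => (hl z hz).le) (isClosed_le l.continuous continuous_const)
  exact this (hc.closure_interior_eq_closure_of_nonempty_interior ⟨a, ha⟩ ▸ subset_closure hy)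

variable [FiniteDimensional ℝ E]

lemma subset_convexHull_extremePoints_of_sub_mem (V : Submodule ℝ E) {w : E} {s : Set E}
    (hs : IsCompact s) (hc : Convex ℝ s) (hsV : ∀ y ∈ s, y - w ∈ V)
    (hV : ∀ t : Set V, IsCompact t → Convex ℝ t → t ⊆ convexHull ℝ (t.extremePoints ℝ)) :
    s ⊆ convexHull ℝ (s.extremePoints ℝ) := by
  let f : V →ᵃ[ℝ] E := AffineMap.const ℝ V w + V.subtype.toAffineMap
  have hf : Isometry f := Isometry.of_dist_eq fun u u' => by simp [f, Subtype.dist_eq]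
  have hfs : f '' (f ⁻¹' s) = s :=
    image_preimage_eq_of_subset fun y hy => ⟨⟨y - w, hsV y hy⟩, by simp [f]⟩
  calc s = f '' (f ⁻¹' s) := hfs.symm
    _ ⊆ f '' convexHull ℝ ((f ⁻¹' s).extremePoints ℝ) :=
      image_mono (hV _ (hf.isClosedEmbedding.isCompact_preimage hs) (hc.affine_preimage f))
    _ = convexHull ℝ (f '' (f ⁻¹' s).extremePoints ℝ) := f.image_convexHull _
    _ ⊆ convexHull ℝ (s.extremePoints ℝ) := convexHull_mono <|
      (image_extremePoints_subset_of_injective f hf.injective _).trans_eq (by rw [hfs])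

lemma mem_convexHull_extremePoints_of_notMem_interior
    (hlow : ∀ V : Submodule ℝ E, V ≠ ⊤ →
      ∀ t : Set V, IsCompact t → Convex ℝ t → t ⊆ convexHull ℝ (t.extremePoints ℝ))
    {s : Set E} (hs : IsCompact s) (hc : Convex ℝ s) (hint : (interior s).Nonempty)
    {p : E} (hp : p ∈ s) (hpi : p ∉ interior s) : p ∈ convexHull ℝ (s.extremePoints ℝ) := by
  obtain ⟨l, hl, hpl⟩ := exists_ne_zero_mem_toExposed hc hint hp hpi
  have hG : IsExposed ℝ s (l.toExposed s) := ContinuousLinearMap.toExposed.isExposed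
  have hker : LinearMap.ker (l : E →ₗ[ℝ] ℝ) ≠ ⊤ := by
    rw [Ne, LinearMap.ker_eq_top]
    exact_mod_cast hl
  have hface := subset_convexHull_extremePoints_of_sub_mem _ (w := p) (hG.isCompact hs)
    (hG.convex hc) (fun y hy => by
      simp [LinearMap.mem_ker, le_antisymm (hpl.2 y hy.1) (hy.2 p hp)]) (hlow _ hker)
  exact convexHull_mono hG.isExtreme.extremePoints_subset_extremePoints (hface hpl)

lemma subset_convexHull_extremePoints_of_interior_eq_empty
    (hlow : ∀ V : Submodule ℝ E, V ≠ ⊤ →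
      ∀ t : Set V, IsCompact t → Convex ℝ t → t ⊆ convexHull ℝ (t.extremePoints ℝ))
    {s : Set E} (hs : IsCompact s) (hc : Convex ℝ s) (hint : interior s = ∅) :
    s ⊆ convexHull ℝ (s.extremePoints ℝ) := by
  intro x hx
  have hV : (affineSpan ℝ s).direction ≠ ⊤ := by
    rw [Ne, AffineSubspace.direction_eq_top_iff_of_nonempty ⟨x, subset_affineSpan ℝ s hx⟩,
      ← hc.interior_nonempty_iff_affineSpan_eq_top, hint]
    exact not_nonempty_empty
  exact subset_convexHull_extremePoints_of_sub_mem _ hs hc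
    (fun y hy => AffineSubspace.vsub_mem_direction (subset_affineSpan ℝ s hy)
      (subset_affineSpan ℝ s hx)) (hlow _ hV) hx

theorem IsCompact.subset_convexHull_extremePoints {s : Set E} (hs : IsCompact s)
    (hc : Convex ℝ s) : s ⊆ convexHull ℝ (s.extremePoints ℝ) := by
  induction hN : finrank ℝ E using Nat.strong_induction_on generalizing E with
  | _ N ih =>
  have hlow : ∀ V : Submodule ℝ E, V ≠ ⊤ →
      ∀ t : Set V, IsCompact t → Convex ℝ t → t ⊆ convexHull ℝ (t.extremePoints ℝ) :=
    fun V hV t ht htc => ih _ (hN ▸ Submodule.finrank_lt hV) ht htc rfl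
  rcases (interior s).eq_empty_or_nonempty with hint | hint
  · exact subset_convexHull_extremePoints_of_interior_eq_empty hlow hs hc hint
  rcases subsingleton_or_nontrivial E with hE | hE
  · rw [Set.extremePoints_eq_self]
    exact subset_convexHull ℝ s
  obtain ⟨v, hv⟩ := exists_ne (0 : E)
  intro x hx
  obtain ⟨a, ha, hp, hpi⟩ := exists_nonneg_add_smul_mem_diff_interior hs hx hv
  obtain ⟨b, hb, hq, hqi⟩ := exists_nonneg_add_smul_mem_diff_interior hs hx (neg_ne_zero.2 hv)
  rw [smul_neg, ← sub_eq_add_neg] at hq hqi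
  exact (convex_convexHull ℝ _).segment_subset
    (mem_convexHull_extremePoints_of_notMem_interior hlow hs hc hint hp hpi)
    (mem_convexHull_extremePoints_of_notMem_interior hlow hs hc hint hq hqi)
    (self_mem_segment_add_smul_sub_smul x v ha hb)

end Minkowski

lemma eventually_abs_add_mul_lt_abs {a b : ℝ} (h : b * a < 0) :
    ∀ᶠ ε in 𝓝[>] (0 : ℝ), |a + ε * b| < |a| := by
  have hb : 0 < b ^ 2 := by
    have : b ≠ 0 := by rintro rfl; simp at h
    positivity
  filter_upwards [Ioo_mem_nhdsGT (div_pos (neg_pos.2 h) hb)] with ε ⟨hε0, hε⟩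
  rw [lt_div_iff₀ hb] at hε
  rw [← sq_lt_sq]
  nlinarith [mul_lt_mul_of_pos_left hε hε0]

lemma eventually_abs_add_mul_lt {a b c : ℝ} (h : |a| < c) :
    ∀ᶠ ε in 𝓝 (0 : ℝ), |a + ε * b| < c :=
  (continuous_const.add (continuous_id.mul continuous_const)).abs.continuousAt.eventually_lt
    continuousAt_const (by simpa using h)

lemma Illuminates.ne_zero {n : ℕ} {K : Set (Fin n → ℝ)} {d x : Fin n → ℝ}
    (h : Illuminates K d x) (hx : x ∈ frontier K) : d ≠ 0 := by
  rintro rfl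
  obtain ⟨ε, -, hε⟩ := h
  exact hx.2 (by simpa using hε)

lemma illumNumber_le_card {n : ℕ} {K : Set (Fin n → ℝ)} (D : Finset (Fin n → ℝ))
    (hD : IlluminatesSet K D) : illumNumber K ≤ D.card := by
  classical
  refine (Nat.sInf_le ?_).trans (Finset.card_filter_le D (· ≠ 0))
  refine ⟨_, rfl, fun d hd => (Finset.mem_filter.1 hd).2, fun x hx => ?_⟩
  obtain ⟨d, hdD, hd⟩ := hD x hx
  exact ⟨d, Finset.mem_filter.2 ⟨hdD, hd.ne_zero hx⟩, hd⟩

namespace Unconditional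

variable {n : ℕ} {B : Set (Fin n → ℝ)}

lemma neg_mem (hu : Unconditional B) {x : Fin n → ℝ} (hx : x ∈ B) : -x ∈ B := by
  convert hu x hx (fun _ => -1) fun _ => Or.inr rfl using 1
  ext
  simp

lemma update_mem (hu : Unconditional B) (hconv : Convex ℝ B) {x : Fin n → ℝ} (hx : x ∈ B)
    {j : Fin n} {c : ℝ} (hc : |c| ≤ |x j|) : Function.update x j c ∈ B := by
  rcases eq_or_ne (x j) 0 with hxj | hxj
  · rw [hxj, abs_zero, abs_nonpos_iff] at hc
    rwa [hc, ← hxj, Function.update_eq_self]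
  have hflip : Function.update x j (-x j) ∈ B := by
    convert hu x hx (Function.update 1 j (-1)) (fun i => by
      rcases eq_or_ne i j with rfl | hij <;> simp [*]) using 1
    ext i
    rcases eq_or_ne i j with rfl | hij <;> simp [*]
  have hcx : |c / x j| ≤ 1 := by rwa [abs_div, div_le_one (abs_pos.2 hxj)]
  convert hconv hx hflip (a := (1 + c / x j) / 2) (b := (1 - c / x j) / 2)
    (by linarith [neg_abs_le (c / x j)]) (by linarith [le_abs_self (c / x j)]) (by ring) using 1
  ext i
  rcases eq_or_ne i j with rfl | hij
  · simp only [Function.update_self, Pi.add_apply, Pi.smul_apply, smul_eq_mul]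
    field_simp
    ring
  · simp only [Function.update_of_ne hij, Pi.add_apply, Pi.smul_apply, smul_eq_mul]
    ring

lemma mem_of_abs_le (hu : Unconditional B) (hconv : Convex ℝ B) {x z : Fin n → ℝ} (hx : x ∈ B)
    (hz : ∀ i, |z i| ≤ |x i|) : z ∈ B := by
  classical
  suffices ∀ S : Finset (Fin n), ∀ z : Fin n → ℝ, (∀ i, |z i| ≤ |x i|) → (∀ i ∉ S, z i = x i) →
      z ∈ B from this Finset.univ z hz (by simp)
  intro S
  induction S using Finset.induction with
  | empty =>
    intro z _ hzx
    rwa [show z = x from funext fun i => hzx i (Finset.notMem_empty i)]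
  | insert j S _ ih =>
    intro z hz hzx
    have hz' : Function.update z j (x j) ∈ B := by
      refine ih _ (fun i => ?_) (fun i hi => ?_) <;> rcases eq_or_ne i j with rfl | hij
      all_goals simp_all
    simpa using update_mem hu hconv hz' (j := j) (c := z j) (by simpa using hz j)

lemma zero_mem_interior (hu : Unconditional B) (hconv : Convex ℝ B)
    (hint : (interior B).Nonempty) : (0 : Fin n → ℝ) ∈ interior B := by
  obtain ⟨p, hp⟩ := hint
  have hp' : -p ∈ interior B :=
    interior_maximal (fun y hy => by simpa using hu.neg_mem (interior_subset hy))
      isOpen_interior.neg (by simpa using hp)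
  simpa using hconv.interior hp hp' (a := 1 / 2) (b := 1 / 2) (by norm_num) (by norm_num)
    (by norm_num)

lemma mem_interior_of_abs_lt (hu : Unconditional B) (hconv : Convex ℝ B)
    (h0 : (0 : Fin n → ℝ) ∈ interior B) {w z : Fin n → ℝ} (hw : w ∈ B)
    (hz : ∀ i, z i = 0 ∨ |z i| < |w i|) : z ∈ interior B := by
  have hscale : ∀ᶠ s in 𝓝[<] (1 : ℝ), ∀ i, |z i| ≤ s * |w i| := by
    refine eventually_all.2 fun i => ?_
    rcases hz i with hzi | hzi
    · filter_upwards [Ioo_mem_nhdsLT zero_lt_one] with s hs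
      simpa [hzi] using mul_nonneg hs.1.le (abs_nonneg (w i))
    · have hw : 0 < |w i| := (abs_nonneg _).trans_lt hzi
      filter_upwards [Ioo_mem_nhdsLT ((div_lt_one hw).2 hzi)] with s hs
      exact ((div_lt_iff₀ hw).1 hs.1).le
  obtain ⟨s, hs, hs0, hs1⟩ := (hscale.and (Ioo_mem_nhdsLT zero_lt_one)).exists
  have hzs : s⁻¹ • z ∈ B := hu.mem_of_abs_le hconv hw fun i => by
    simpa [abs_mul, abs_of_pos hs0, inv_mul_le_iff₀ hs0] using hs i
  simpa [smul_smul, hs0.ne'] using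
    hconv.combo_interior_self_mem_interior h0 hzs (sub_pos.2 hs1) hs0.le (by ring)

lemma illuminates_of_eventually (hu : Unconditional B) (hconv : Convex ℝ B)
    (h0 : (0 : Fin n → ℝ) ∈ interior B) {w x d : Fin n → ℝ} (hw : w ∈ B)
    (h : ∀ i, ∀ᶠ ε in 𝓝[>] (0 : ℝ), x i + ε * d i = 0 ∨ |x i + ε * d i| < |w i|) :
    Illuminates B d x := by
  obtain ⟨ε, hε, hε0⟩ := ((eventually_all.2 h).and self_mem_nhdsWithin).exists
  exact ⟨ε, hε0, hu.mem_interior_of_abs_lt hconv h0 hw fun i => by simpa using hε i⟩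

lemma illuminates_of_mul_neg (hu : Unconditional B) (hconv : Convex ℝ B)
    (h0 : (0 : Fin n → ℝ) ∈ interior B) {x d : Fin n → ℝ} (hx : x ∈ B)
    (hd0 : ∀ i, x i = 0 → d i = 0) (hd : ∀ i, x i ≠ 0 → d i * x i < 0) :
    Illuminates B d x := by
  refine hu.illuminates_of_eventually hconv h0 hx fun i => ?_
  rcases eq_or_ne (x i) 0 with hxi | hxi
  · exact Eventually.of_forall fun ε => Or.inl (by simp [hxi, hd0 i hxi])
  · exact (eventually_abs_add_mul_lt_abs (hd i hxi)).mono fun ε => Or.inr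

lemma exists_pos_abs_le_of_cubelike (hu : Unconditional B) (hconv : Convex ℝ B)
    (hcomp : IsCompact B) (hcl : Cubelike B) {x : Fin n → ℝ} (hx : x ∈ B) :
    ∃ w ∈ B, ∀ i, 0 < w i ∧ |x i| ≤ w i := by
  let P : Set (Fin n → ℝ) := {y | ∃ w ∈ B, ∀ i, 0 < w i ∧ |y i| ≤ w i}
  have hext : B.extremePoints ℝ ⊆ P := fun e he =>
    ⟨fun i => |e i|, hu.mem_of_abs_le hconv he.1 (by simp),
      fun i => ⟨abs_pos.2 (hcl e he i), le_rfl⟩⟩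
  have hP : Convex ℝ P := by
    rintro y₁ ⟨w₁, hw₁, h₁⟩ y₂ ⟨w₂, hw₂, h₂⟩ a b ha hb hab
    refine ⟨a • w₁ + b • w₂, hconv hw₁ hw₂ ha hb hab, fun i => ⟨?_, ?_⟩⟩
    · rcases ha.eq_or_lt with rfl | ha'
      · simpa [show b = 1 by linarith] using (h₂ i).1
      · simpa using add_pos_of_pos_of_nonneg (mul_pos ha' (h₁ i).1)
          (mul_nonneg hb (h₂ i).1.le)
    · calc |(a • y₁ + b • y₂) i| ≤ a * |y₁ i| + b * |y₂ i| := by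
            simpa [abs_mul, abs_of_nonneg ha, abs_of_nonneg hb] using
              abs_add_le (a * y₁ i) (b * y₂ i)
        _ ≤ (a • w₁ + b • w₂) i := by
            simpa using add_le_add (mul_le_mul_of_nonneg_left (h₁ i).2 ha)
              (mul_le_mul_of_nonneg_left (h₂ i).2 hb)
  exact convexHull_min hext hP (hcomp.subset_convexHull_extremePoints hconv hx)

lemma exists_illuminates_of_cubelike (hu : Unconditional B) (hconv : Convex ℝ B)
    (hcomp : IsCompact B) (h0 : (0 : Fin n → ℝ) ∈ interior B) (hcl : Cubelike B)
    {x : Fin n → ℝ} (hx : x ∈ B) :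
    ∃ d : Fin n → ℝ, (∀ i, d i = 1 ∨ d i = -1) ∧ Illuminates B d x := by
  obtain ⟨w, hw, hxw⟩ := hu.exists_pos_abs_le_of_cubelike hconv hcomp hcl hx
  refine ⟨fun i => if 0 < x i then -1 else 1, fun i => by dsimp only; split_ifs <;> simp,
    hu.illuminates_of_eventually hconv h0 hw fun i => ?_⟩
  rcases eq_or_ne (x i) 0 with hxi | hxi
  · refine (eventually_abs_add_mul_lt ?_).filter_mono nhdsWithin_le_nhds |>.mono fun ε => Or.inr
    rw [abs_of_pos (hxw i).1, hxi, abs_zero]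
    exact (hxw i).1
  · refine (eventually_abs_add_mul_lt_abs ?_).mono fun ε hε => Or.inr (hε.trans_le ?_)
    · split_ifs with hpos
      · linarith
      · simpa using lt_of_le_of_ne (not_lt.1 hpos) hxi
    · exact (hxw i).2.trans (le_abs_self _)

end Unconditional

/-- For a 1-unconditional convex body `B`: any direction with the
same zero set as a boundary point `x` and opposite signs elsewhere illuminates
`x`; consequently `{-1,0,1}^n ∖ {0}` illuminates `B`, and if `B` is cubelike
then `{-1,1}^n` illuminates `B`, so `𝕀(B) ≤ 2^n`. -/
theorem stmt5 (n : ℕ) (B : Set (Fin n → ℝ)) (hB : IsConvexBody B)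
    (hu : Unconditional B) :
    (∀ x ∈ frontier B, ∀ d : Fin n → ℝ,
        (∀ i, d i = 0 ↔ x i = 0) → (∀ i, x i ≠ 0 → d i * x i < 0) →
        Illuminates B d x) ∧
      IlluminatesSet B {d | (∀ i, d i = 1 ∨ d i = 0 ∨ d i = -1) ∧ d ≠ 0} ∧
      (Cubelike B →
        IlluminatesSet B {d | ∀ i, d i = 1 ∨ d i = -1} ∧
          illumNumber B ≤ 2 ^ n) := by
  obtain ⟨hconv, hcomp, hint⟩ := hB
  have h0 := hu.zero_mem_interior hconv hint
  have hmem : ∀ x ∈ frontier B, x ∈ B := fun x hx => hcomp.isClosed.frontier_subset hx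
  have hsign : ∀ x ∈ frontier B, ∀ d : Fin n → ℝ, (∀ i, d i = 0 ↔ x i = 0) →
      (∀ i, x i ≠ 0 → d i * x i < 0) → Illuminates B d x := fun x hx d hdx hd =>
    hu.illuminates_of_mul_neg hconv h0 (hmem x hx) (fun i => (hdx i).2) hd
  refine ⟨hsign, fun x hx => ?_, fun hcl => ?_⟩
  · have hill := hsign x hx (fun i => -Real.sign (x i)) (fun i => by simp [Real.sign_eq_zero_iff])
      fun i hi => by simpa using Real.sign_mul_pos_of_ne_zero _ hi
    refine ⟨_, ⟨fun i => ?_, hill.ne_zero hx⟩, hill⟩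
    rcases Real.sign_apply_eq (x i) with h | h | h <;> simp [h]
  have hcube : IlluminatesSet B {d | ∀ i, d i = 1 ∨ d i = -1} := fun x hx =>
    hu.exists_illuminates_of_cubelike hconv hcomp h0 hcl (hmem x hx)
  refine ⟨hcube, ?_⟩
  calc illumNumber B ≤ (Fintype.piFinset fun _ : Fin n => ({1, -1} : Finset ℝ)).card :=
        illumNumber_le_card _ fun x hx => (hcube x hx).imp fun d hd =>
          ⟨by simpa [Fintype.mem_piFinset] using hd.1, hd.2⟩
    _ = 2 ^ n := by simp [Fintype.card_piFinset, Finset.card_pair (by norm_num : (1 : ℝ) ≠ -1)]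
end

section
/- Let B ∈ 𝒰³ and suppose e_i + e_j ∉ B for every pair of distinct indices i, j ∈ {1,2,3}. Then there exist δ ∈ (0,1) and a permutation σ of the coordinates {1,2,3} such that the set obtained by applying σ to {±(1,δ,0), ±(−δ,1,0), ±(0,0,1)} illuminates B. In particular 𝕀(B) ≤ 6. -/
open Set

/-!
Call `ν` an outer normal of `B` at `x` if `ν ⬝ᵥ y ≤ 1` on `B` with equality at `x`. As `0` is an
interior point, Hahn–Banach shows that `d` illuminates a boundary point `x` once `ν ⬝ᵥ d < 0` for
every outer normal `ν` at `x`. Unconditionality makes `B` solid (decreasing coordinates in absolute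
value stays in `B`); hence `ν i * x i ≥ 0`, `|ν i| ≤ 1`, and `|ν|` is an outer normal at `|x|`.

Coordinates `k` for which some point of the face `x k = 1` has a nonnegative outer normal with
`ν k = 0` cannot come in pairs `k ≠ l`: the two points would each lie strictly above the other in
the remaining coordinate, because `e k + e l ∉ B`. After permuting, the last coordinate is not of
this kind. By compactness some `β < 1` bounds `min |x 2| |x i|` on `B` (`i = 0, 1`); take
`δ = (1 - β) / 2`. At a boundary point `x`, either all outer normals have `ν 2 * x 2 > 0` and `∓e₃`
illuminates `x`, or `|x 2| < 1`, and even `|x 2| ≤ β` when `x 0 = 0` or `x 1 = 0`. Then the sign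
conditions `ν i * x i ≥ 0` make the one of `±(1, δ, 0)`, `±(-δ, 1, 0)` chosen by the signs of
`x 0`, `x 1` illuminate `x`.
-/

open Function

section Unconditional

variable {n : ℕ} {K : Set (Fin n → ℝ)}

theorem Unconditional.update_neg_mem (hK : Unconditional K) {w : Fin n → ℝ} (hw : w ∈ K)
    (i : Fin n) : update w i (-w i) ∈ K := by
  convert hK w hw (update 1 i (-1)) (fun j => ?_) using 1
  · ext j; rcases eq_or_ne j i with rfl | hj <;> simp [*]
  · rcases eq_or_ne j i with rfl | hj <;> simp [*]

theorem Unconditional.neg_mem_s7 (hK : Unconditional K) {w : Fin n → ℝ} (hw : w ∈ K) : -w ∈ K := by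
  convert hK w hw (fun _ => -1) (fun _ => Or.inr rfl) using 1
  ext; simp

theorem Unconditional.update_mem_s7 (hK : Unconditional K) (hc : Convex ℝ K) {w : Fin n → ℝ}
    (hw : w ∈ K) (i : Fin n) {t : ℝ} (ht : |t| ≤ |w i|) : update w i t ∈ K := by
  let f : ℝ →ᵃ[ℝ] (Fin n → ℝ) := AffineMap.lineMap (update w i 0) (update w i 1)
  have hf : ∀ s, f s = update w i s := fun s => by
    ext j; rcases eq_or_ne j i with rfl | hj <;> simp [f, AffineMap.lineMap_apply, *]
  have ht' : t ∈ segment ℝ (w i) (-w i) := by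
    rw [segment_eq_uIcc, Set.mem_uIcc]
    rcases abs_cases (w i) with ⟨h, -⟩ | ⟨h, -⟩ <;> [right; left] <;>
      constructor <;> linarith [abs_le.1 ht]
  have hseg := image_segment ℝ f (w i) (-w i)
  rw [hf, hf, update_eq_self] at hseg
  rw [← hf]
  exact hc.segment_subset hw (hK.update_neg_mem hw i) (hseg ▸ Set.mem_image_of_mem f ht')

theorem Unconditional.mem_of_abs_le_s7 (hK : Unconditional K) (hc : Convex ℝ K) {w z : Fin n → ℝ}
    (hw : w ∈ K) (hz : ∀ i, |z i| ≤ |w i|) : z ∈ K := by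
  classical
  suffices ∀ s : Finset (Fin n), s.piecewise z w ∈ K by simpa using this Finset.univ
  intro s
  induction s using Finset.induction_on with
  | empty => simpa using hw
  | insert a s ha ih =>
    rw [Finset.piecewise_insert]
    exact hK.update_mem_s7 hc ih a (by rw [s.piecewise_eq_of_notMem _ _ ha]; exact hz a)

theorem Unconditional.zero_mem_interior_s7 (hK : Unconditional K) (hc : Convex ℝ K)
    (hint : (interior K).Nonempty) : (0 : Fin n → ℝ) ∈ interior K := by
  obtain ⟨z, hz⟩ := hint
  have hneg : -z ∈ interior K := by
    have hsub : -interior K ⊆ interior K := interior_maximal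
      (fun y hy => by simpa using hK.neg_mem_s7 (interior_subset hy)) isOpen_interior.neg
    exact hsub (by simpa using hz)
  simpa using hc.interior hz hneg (a := 1 / 2) (b := 1 / 2) (by norm_num) (by norm_num)
    (by norm_num)

end Unconditional

namespace memU

variable {n : ℕ} {K : Set (Fin n → ℝ)}

theorem isClosed (hK : memU K) : IsClosed K := hK.1.2.1.isClosed

theorem stdB_mem (hK : memU K) (i : Fin n) : stdB i ∈ K :=
  hK.isClosed.frontier_subset (hK.2.2 i)

theorem zero_mem_interior_s7 (hK : memU K) : (0 : Fin n → ℝ) ∈ interior K :=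
  hK.2.1.zero_mem_interior_s7 hK.1.1 hK.1.2.2

theorem mem_of_abs_le_s7 (hK : memU K) {w z : Fin n → ℝ} (hw : w ∈ K) (hz : ∀ i, |z i| ≤ |w i|) :
    z ∈ K :=
  hK.2.1.mem_of_abs_le_s7 hK.1.1 hw hz

theorem abs_le_one (hK : memU K) {w : Fin n → ℝ} (hw : w ∈ K) (i : Fin n) : |w i| ≤ 1 := by
  by_contra! h
  have hpos : 0 < |w i| := one_pos.trans h
  have hmem : Pi.single i |w i| ∈ K := hK.mem_of_abs_le_s7 hw fun j => by
    rcases eq_or_ne j i with rfl | hj <;> simp [*]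
  have hint := hK.1.1.combo_interior_self_mem_interior hK.zero_mem_interior_s7 hmem
    (a := 1 - |w i|⁻¹) (b := |w i|⁻¹) (by simp [inv_lt_one_of_one_lt₀ h]) (by positivity)
    (by ring)
  rw [smul_zero, zero_add, ← Pi.single_smul, smul_eq_mul, inv_mul_cancel₀ hpos.ne'] at hint
  exact (hK.2.2 i).2 hint

theorem mul_apply_le_abs_left (hK : memU K) {x : Fin n → ℝ} (hx : x ∈ K) (ν : Fin n → ℝ)
    (i : Fin n) : ν i * x i ≤ |ν i| := by
  rw [← mul_one |ν i|]
  exact (le_abs_self _).trans (by rw [abs_mul]; gcongr; exact hK.abs_le_one hx i)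

theorem stdB_add_stdB_mem (hK : memU K) {w : Fin n → ℝ} (hw : w ∈ K) {i j : Fin n}
    (hij : i ≠ j) (hi : 1 ≤ |w i|) (hj : 1 ≤ |w j|) : stdB i + stdB j ∈ K :=
  hK.mem_of_abs_le_s7 hw fun l => by
    rcases eq_or_ne l i with rfl | hli
    · simpa [stdB, hij] using hi
    rcases eq_or_ne l j with rfl | hlj
    · simpa [stdB, hli] using hj
    simp [stdB, hli, hlj]

theorem exists_min_abs_le (hK : memU K) {i j : Fin n} (hij : i ≠ j)
    (hij' : stdB i + stdB j ∉ K) : ∃ β < 1, ∀ w ∈ K, min |w i| |w j| ≤ β := by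
  obtain ⟨w₀, hw₀, hmax⟩ := hK.1.2.1.exists_isMaxOn ⟨0, interior_subset hK.zero_mem_interior_s7⟩
    (f := fun w => min |w i| |w j|) (by fun_prop)
  refine ⟨min |w₀ i| |w₀ j|, ?_, fun w hw => isMaxOn_iff.1 hmax w hw⟩
  by_contra! h
  exact hij' (hK.stdB_add_stdB_mem hw₀ hij (le_min_iff.1 h).1 (le_min_iff.1 h).2)

end memU

section OuterNormal

variable {n : ℕ} {K : Set (Fin n → ℝ)}

def IsOuterNormal (K : Set (Fin n → ℝ)) (ν x : Fin n → ℝ) : Prop :=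
  (∀ y ∈ K, ν ⬝ᵥ y ≤ 1) ∧ ν ⬝ᵥ x = 1

theorem apply_single_one_dotProduct {ι F : Type*} [Fintype ι] [DecidableEq ι]
    [FunLike F (ι → ℝ) ℝ] [LinearMapClass F ℝ (ι → ℝ) ℝ] (f : F) (y : ι → ℝ) :
    (fun i => f (Pi.single i 1)) ⬝ᵥ y = f y := by
  conv_rhs => rw [← Finset.univ_sum_single y]
  simp only [dotProduct, map_sum]
  refine Finset.sum_congr rfl fun i _ => ?_
  rw [mul_comm, ← smul_eq_mul, ← map_smul, ← Pi.single_smul', smul_eq_mul, mul_one]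

theorem illuminates_of_forall_isOuterNormal (hc : Convex ℝ K)
    (h0 : (0 : Fin n → ℝ) ∈ interior K) {x d : Fin n → ℝ} (hx : x ∈ frontier K)
    (hd : ∀ ν, IsOuterNormal K ν x → ν ⬝ᵥ d < 0) : Illuminates K d x := by
  by_contra hnot
  have hdisj : Disjoint (interior K) (segment ℝ x (x + d)) := by
    rw [Set.disjoint_right, segment_eq_image']
    rintro _ ⟨t, ht, rfl⟩ hin
    rcases ht.1.eq_or_lt with rfl | htpos
    · exact hx.2 (by simpa using hin)
    · exact hnot ⟨t, htpos, by simpa using hin⟩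
  obtain ⟨f, u, hfK, hfseg⟩ :=
    geometric_hahn_banach_open hc.interior isOpen_interior (convex_segment _ _) hdisj
  have hu : 0 < u := by simpa using hfK 0 h0
  have hfcl : closure K ⊆ {y | f y ≤ u} := by
    rw [← hc.closure_interior_eq_closure_of_nonempty_interior ⟨0, h0⟩]
    exact closure_minimal (fun y hy => (hfK y hy).le) (isClosed_le f.continuous continuous_const)
  have hfx : f x = u := le_antisymm (hfcl hx.1) (hfseg x (left_mem_segment ℝ x (x + d)))
  have hfd : 0 ≤ f d := by
    have := hfseg (x + d) (right_mem_segment ℝ x (x + d))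
    rw [map_add, hfx] at this
    linarith
  set ν : Fin n → ℝ := u⁻¹ • fun i => f (Pi.single i 1)
  have hν : ∀ y, ν ⬝ᵥ y = f y / u := fun y => by
    rw [smul_dotProduct, apply_single_one_dotProduct, smul_eq_mul, inv_mul_eq_div]
  refine (hd ν ⟨fun y hy => ?_, ?_⟩).not_ge ?_
  · rw [hν, div_le_one hu]; exact hfcl (subset_closure hy)
  · rw [hν, hfx, div_self hu.ne']
  · rw [hν]; positivity

theorem update_zero_dotProduct (ν y : Fin n → ℝ) (k : Fin n) :
    update ν k 0 ⬝ᵥ y = ν ⬝ᵥ y - ν k * y k := by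
  simp [Pi.update_eq_sub_add_single, sub_dotProduct, single_dotProduct]

theorem dotProduct_update_zero (ν y : Fin n → ℝ) (k : Fin n) :
    ν ⬝ᵥ update y k 0 = ν ⬝ᵥ y - ν k * y k := by
  rw [dotProduct_comm, update_zero_dotProduct, dotProduct_comm, mul_comm]

end OuterNormal

namespace IsOuterNormal

variable {n : ℕ} {K : Set (Fin n → ℝ)} {ν x : Fin n → ℝ}

theorem abs_apply_le_one (hK : memU K) (hν : IsOuterNormal K ν x) (i : Fin n) : |ν i| ≤ 1 := by
  have h₁ := hν.1 _ (hK.stdB_mem i)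
  have h₂ := hν.1 _ (hK.2.1.neg_mem_s7 (hK.stdB_mem i))
  simp only [stdB, dotProduct_neg, dotProduct_single, mul_one] at h₁ h₂
  exact abs_le.2 ⟨by linarith, h₁⟩

theorem mul_apply_le_abs_right (hK : memU K) (hν : IsOuterNormal K ν x) (i : Fin n) :
    ν i * x i ≤ |x i| := by
  rw [← one_mul |x i|]
  exact (le_abs_self _).trans (by rw [abs_mul]; gcongr; exact hν.abs_apply_le_one hK i)

theorem mul_apply_nonneg (hK : Unconditional K) (hx : x ∈ K) (hν : IsOuterNormal K ν x)
    (i : Fin n) : 0 ≤ ν i * x i := by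
  have := hν.1 _ (hK.update_neg_mem hx i)
  rw [Pi.update_eq_sub_add_single, dotProduct_add, dotProduct_sub, dotProduct_single,
    dotProduct_single, hν.2] at this
  linarith

theorem apply_nonpos (hK : Unconditional K) (hx : x ∈ K) (hν : IsOuterNormal K ν x) {i : Fin n}
    (hi : x i < 0) : ν i ≤ 0 :=
  nonpos_of_mul_nonneg_left (hν.mul_apply_nonneg hK hx i) hi

theorem apply_nonneg (hK : Unconditional K) (hx : x ∈ K) (hν : IsOuterNormal K ν x) {i : Fin n}
    (hi : 0 < x i) : 0 ≤ ν i :=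
  nonneg_of_mul_nonneg_left (hν.mul_apply_nonneg hK hx i) hi

theorem update_zero (hK : Unconditional K) (hc : Convex ℝ K) (hx : x ∈ K)
    (hν : IsOuterNormal K ν x) {k : Fin n} (hk : ν k * x k ≤ 0) :
    IsOuterNormal K (update ν k 0) x := by
  have hle : ∀ y ∈ K, update ν k 0 ⬝ᵥ y ≤ 1 := fun y hy => by
    rw [update_zero_dotProduct, ← dotProduct_update_zero]
    exact hν.1 _ (hK.update_mem_s7 hc hy k (by simp))
  refine ⟨hle, le_antisymm (hle x hx) ?_⟩
  rw [update_zero_dotProduct, hν.2]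
  linarith

theorem abs (hK : Unconditional K) (hc : Convex ℝ K) (hx : x ∈ K) (hν : IsOuterNormal K ν x) :
    IsOuterNormal K |ν| |x| := by
  have hle : ∀ y ∈ K, |ν| ⬝ᵥ |y| ≤ 1 := fun y hy => by
    have hz : (fun i => SignType.sign (ν i) * |y i|) ∈ K := hK.mem_of_abs_le_s7 hc hy fun i => by
      rw [abs_mul, abs_abs]
      exact mul_le_of_le_one_left (abs_nonneg _)
        (by rcases SignType.sign (ν i) with _ | _ | _ <;> simp)
    convert hν.1 _ hz using 1
    simp [dotProduct, ← mul_assoc, self_mul_sign]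
  have habs : ∀ y, |ν| ⬝ᵥ y ≤ |ν| ⬝ᵥ |y| := fun y =>
    Finset.sum_le_sum fun i _ => mul_le_mul_of_nonneg_left (le_abs_self _) (abs_nonneg _)
  refine ⟨fun y hy => (habs y).trans (hle y hy), le_antisymm (hle x hx) ?_⟩
  calc (1 : ℝ) = ν ⬝ᵥ x := hν.2.symm
    _ ≤ |ν| ⬝ᵥ |x| := Finset.sum_le_sum fun i _ => by
      simpa only [Pi.abs_apply, ← abs_mul] using le_abs_self (ν i * x i)

end IsOuterNormal

section SideNormal

variable {n : ℕ} {K : Set (Fin n → ℝ)}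

def HasSideNormalAtTop (K : Set (Fin n → ℝ)) (k : Fin n) : Prop :=
  ∃ X ν : Fin n → ℝ, X ∈ K ∧ X k = 1 ∧ IsOuterNormal K ν X ∧ 0 ≤ ν ∧ ν k = 0

theorem memU.hasSideNormalAtTop (hK : memU K) {ν x : Fin n → ℝ} (hx : x ∈ K)
    (hν : IsOuterNormal K ν x) {k : Fin n} (hk : ν k * x k ≤ 0) (hxk : |x k| = 1) :
    HasSideNormalAtTop K k :=
  ⟨|x|, |update ν k 0|, hK.mem_of_abs_le_s7 hx (by simp), by simpa using hxk,
    (hν.update_zero hK.2.1 hK.1.1 hx hk).abs hK.2.1 hK.1.1 hx, abs_nonneg _, by simp⟩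

end SideNormal

section Permutation

variable {n : ℕ} {K : Set (Fin n → ℝ)}

theorem Illuminates.image (T : (Fin n → ℝ) ≃L[ℝ] (Fin n → ℝ)) {d x : Fin n → ℝ}
    (h : Illuminates K d x) : Illuminates (T '' K) (T d) (T x) := by
  obtain ⟨ε, hε, hin⟩ := h
  refine ⟨ε, hε, ?_⟩
  rw [← T.coe_toHomeomorph, ← Homeomorph.image_interior]
  exact ⟨_, hin, by simp⟩

theorem IlluminatesSet.image (T : (Fin n → ℝ) ≃L[ℝ] (Fin n → ℝ)) {D : Set (Fin n → ℝ)}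
    (h : IlluminatesSet K D) : IlluminatesSet (T '' K) (T '' D) := by
  intro y hy
  rw [← T.coe_toHomeomorph, ← Homeomorph.image_frontier] at hy
  obtain ⟨x, hx, rfl⟩ := hy
  obtain ⟨d, hd, hill⟩ := h x hx
  exact ⟨T d, Set.mem_image_of_mem _ hd, hill.image T⟩

noncomputable def permuteCoords (σ : Equiv.Perm (Fin n)) : (Fin n → ℝ) ≃L[ℝ] (Fin n → ℝ) :=
  (LinearEquiv.funCongrLeft ℝ ℝ σ).toContinuousLinearEquiv

@[simp]
theorem permuteCoords_apply (σ : Equiv.Perm (Fin n)) (x : Fin n → ℝ) :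
    permuteCoords σ x = x ∘ σ :=
  rfl

theorem permuteCoords_stdB (σ : Equiv.Perm (Fin n)) (i : Fin n) :
    permuteCoords σ (stdB (σ i)) = stdB i := by
  simp [stdB, Pi.single_comp_equiv]

theorem memU.image_permuteCoords (hK : memU K) (σ : Equiv.Perm (Fin n)) :
    memU (permuteCoords σ '' K) := by
  refine ⟨⟨hK.1.1.linear_image (permuteCoords σ).toLinearMap,
    hK.1.2.1.image (permuteCoords σ).continuous, ?_⟩, ?_, fun i => ?_⟩
  · rw [← (permuteCoords σ).coe_toHomeomorph, ← Homeomorph.image_interior]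
    exact hK.1.2.2.image _
  · rintro _ ⟨w, hw, rfl⟩ ε hε
    exact ⟨_, hK.2.1 w hw (ε ∘ σ.symm) (fun i => hε _), by ext; simp⟩
  · rw [← permuteCoords_stdB σ, ← (permuteCoords σ).coe_toHomeomorph,
      ← Homeomorph.image_frontier]
    exact Set.mem_image_of_mem _ (hK.2.2 _)

theorem stdB_add_stdB_notMem_image_permuteCoords
    (hpairs : ∀ i j : Fin n, i ≠ j → stdB i + stdB j ∉ K) (σ : Equiv.Perm (Fin n))
    {i j : Fin n} (hij : i ≠ j) : stdB i + stdB j ∉ permuteCoords σ '' K := by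
  rw [← permuteCoords_stdB σ i, ← permuteCoords_stdB σ j, ← map_add,
    (permuteCoords σ).injective.mem_set_image]
  exact hpairs _ _ (σ.injective.ne hij)

theorem HasSideNormalAtTop.of_image_permuteCoords {σ : Equiv.Perm (Fin n)} {k : Fin n}
    (h : HasSideNormalAtTop (permuteCoords σ '' K) k) : HasSideNormalAtTop K (σ k) := by
  obtain ⟨_, ν, ⟨X, hX, rfl⟩, hXk, hν, hν0, hνk⟩ := h
  refine ⟨X, ν ∘ σ.symm, hX, by simpa using hXk, ⟨fun y hy => ?_, ?_⟩, fun i => hν0 (σ.symm i),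
    by simpa using hνk⟩
  · rw [comp_equiv_symm_dotProduct]
    exact hν.1 _ ⟨y, hy, rfl⟩
  · rw [comp_equiv_symm_dotProduct]
    exact hν.2

end Permutation

section Dim3

variable {A : Set (Fin 3 → ℝ)}

def tiltedCross (δ : ℝ) : Set (Fin 3 → ℝ) :=
  {![1, δ, 0], -![1, δ, 0], ![-δ, 1, 0], -![-δ, 1, 0], ![0, 0, 1], -![0, 0, 1]}

theorem dotProduct_eq_of_ne {k l m : Fin 3} (hkl : k ≠ l) (hkm : k ≠ m) (hlm : l ≠ m)
    (ν x : Fin 3 → ℝ) : ν ⬝ᵥ x = ν k * x k + ν l * x l + ν m * x m := by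
  have huniv : (Finset.univ : Finset (Fin 3)) = {k, l, m} :=
    (Finset.eq_univ_of_card _ (Finset.card_eq_three.2 ⟨k, l, m, hkl, hkm, hlm, rfl⟩)).symm
  rw [dotProduct, huniv, Finset.sum_insert (by simp [hkl, hkm]), Finset.sum_pair hlm, add_assoc]

theorem IsOuterNormal.apply_lt_of_apply_eq_one (hA : memU A)
    (hpairs : ∀ i j : Fin 3, i ≠ j → stdB i + stdB j ∉ A) {k l m : Fin 3} (hkl : k ≠ l)
    (hkm : k ≠ m) (hlm : l ≠ m) {X ν : Fin 3 → ℝ} (hX : X ∈ A) (hXk : X k = 1)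
    (hν : IsOuterNormal A ν X) (hν0 : 0 ≤ ν) (hνk : ν k = 0) {Y : Fin 3 → ℝ} (hY : Y ∈ A)
    (hYl : Y l = 1) : Y m < X m := by
  have hlt : ∀ j, k ≠ j → |X j| < 1 := fun j hkj => (hA.abs_le_one hX j).lt_of_ne fun hj =>
    hpairs k j hkj (hA.stdB_add_stdB_mem hX hkj (by simp [hXk]) hj.ge)
  have hνX := hν.2
  have hνY := hν.1 Y hY
  rw [dotProduct_eq_of_ne hkl hkm hlm, hνk, zero_mul, zero_add] at hνX hνY
  rw [hYl, mul_one] at hνY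
  have hνl : 0 < ν l := (hν0 l).lt_of_ne' fun h => by
    rw [h, Pi.zero_apply, zero_mul, zero_add] at hνX
    linarith [hν.mul_apply_le_abs_right hA m, hlt m hkm]
  have hXl := (abs_lt.1 (hlt l hkl)).2
  -- `ν ⬝ᵥ Y ≤ 1 = ν ⬝ᵥ X` says `ν l * (1 - X l) ≤ ν m * (X m - Y m)`, and the left side is
  -- positive.
  by_contra! h
  nlinarith [mul_nonneg (hν0 m) (sub_nonneg.2 h)]

theorem exists_not_hasSideNormalAtTop (hA : memU A)
    (hpairs : ∀ i j : Fin 3, i ≠ j → stdB i + stdB j ∉ A) : ∃ k, ¬ HasSideNormalAtTop A k := by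
  by_contra! h
  obtain ⟨X, ν, hX, hX0, hν, hν0, hν0'⟩ := h 0
  obtain ⟨Y, μ, hY, hY2, hμ, hμ0, hμ2⟩ := h 2
  exact (hν.apply_lt_of_apply_eq_one hA hpairs (m := 1) (by decide) (by decide) (by decide)
    hX hX0 hν0 hν0' hY hY2).asymm
    (hμ.apply_lt_of_apply_eq_one hA hpairs (m := 1) (by decide) (by decide) (by decide)
      hY hY2 hμ0 hμ2 hX hX0)

theorem IsOuterNormal.one_sub_abs_le (hA : memU A) {ν x : Fin 3 → ℝ}
    (hν : IsOuterNormal A ν x) : 1 - |x 2| ≤ ν 0 * x 0 + ν 1 * x 1 := by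
  have h := hν.2
  rw [dotProduct, Fin.sum_univ_three] at h
  linarith [hν.mul_apply_le_abs_right hA 2]

theorem exists_vertical_direction {δ : ℝ} {x : Fin 3 → ℝ} {P : (Fin 3 → ℝ) → Prop}
    (h : ∀ ν, P ν → 0 < ν 2 * x 2) : ∃ d ∈ tiltedCross δ, ∀ ν, P ν → ν ⬝ᵥ d < 0 := by
  rcases le_or_gt 0 (x 2) with hx | hx
  · refine ⟨-![0, 0, 1], by simp [tiltedCross], fun ν hν => ?_⟩
    simpa [dotProduct, Fin.sum_univ_three] using pos_of_mul_pos_left (h ν hν) hx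
  · refine ⟨![0, 0, 1], by simp [tiltedCross], fun ν hν => ?_⟩
    simpa [dotProduct, Fin.sum_univ_three] using neg_of_mul_pos_left (h ν hν) hx.le

theorem exists_planar_direction_of_ne_zero (hA : memU A) {δ : ℝ} (hδ : 0 < δ) (hδ1 : δ < 1)
    {x : Fin 3 → ℝ} (hx : x ∈ A) (hx2 : |x 2| < 1) (h0 : x 0 ≠ 0) (h1 : x 1 ≠ 0) :
    ∃ d ∈ tiltedCross δ, ∀ ν, IsOuterNormal A ν x → ν ⬝ᵥ d < 0 := by
  have hpos : ∀ ν, IsOuterNormal A ν x → 0 < |ν 0| + |ν 1| := fun ν hν => by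
    linarith [hν.one_sub_abs_le hA, hA.mul_apply_le_abs_left hx ν 0,
      hA.mul_apply_le_abs_left hx ν 1]
  have hu := hA.2.1
  rcases h0.lt_or_gt with h0 | h0 <;> rcases h1.lt_or_gt with h1 | h1
  · refine ⟨![1, δ, 0], by simp [tiltedCross], fun ν hν => ?_⟩
    have n0 := hν.apply_nonpos hu hx h0
    have n1 := hν.apply_nonpos hu hx h1
    simp [dotProduct, Fin.sum_univ_three]
    nlinarith [hpos ν hν, abs_of_nonpos n0, abs_of_nonpos n1]
  · refine ⟨-![-δ, 1, 0], by simp [tiltedCross], fun ν hν => ?_⟩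
    have n0 := hν.apply_nonpos hu hx h0
    have p1 := hν.apply_nonneg hu hx h1
    simp [dotProduct, Fin.sum_univ_three]
    nlinarith [hpos ν hν, abs_of_nonpos n0, abs_of_nonneg p1]
  · refine ⟨![-δ, 1, 0], by simp [tiltedCross], fun ν hν => ?_⟩
    have p0 := hν.apply_nonneg hu hx h0
    have n1 := hν.apply_nonpos hu hx h1
    simp [dotProduct, Fin.sum_univ_three]
    nlinarith [hpos ν hν, abs_of_nonneg p0, abs_of_nonpos n1]
  · refine ⟨-![1, δ, 0], by simp [tiltedCross], fun ν hν => ?_⟩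
    have p0 := hν.apply_nonneg hu hx h0
    have p1 := hν.apply_nonneg hu hx h1
    simp [dotProduct, Fin.sum_univ_three]
    nlinarith [hpos ν hν, abs_of_nonneg p0, abs_of_nonneg p1]

theorem exists_planar_direction_of_eq_zero (hA : memU A) {δ : ℝ} (hδ : 0 < δ)
    {x : Fin 3 → ℝ} (hx : x ∈ A) (hx2 : |x 2| ≤ 1 - 2 * δ) (hax : x 0 = 0 ∨ x 1 = 0) :
    ∃ d ∈ tiltedCross δ, ∀ ν, IsOuterNormal A ν x → ν ⬝ᵥ d < 0 := by
  have hs : ∀ ν, IsOuterNormal A ν x → 2 * δ ≤ ν 0 * x 0 + ν 1 * x 1 := fun ν hν => by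
    linarith [hν.one_sub_abs_le hA]
  have hdeg : x 0 = 0 → x 1 = 0 → ∀ ν, IsOuterNormal A ν x → False := fun h0 h1 ν hν => by
    have := hs ν hν
    rw [h0, h1, mul_zero, mul_zero, add_zero] at this
    linarith
  have hu := hA.2.1
  rcases hax with h0 | h1
  · rcases lt_trichotomy (x 1) 0 with h1 | h1 | h1
    · refine ⟨![-δ, 1, 0], by simp [tiltedCross], fun ν hν => ?_⟩
      have n1 := hν.apply_nonpos hu hx h1
      simp [dotProduct, Fin.sum_univ_three]
      nlinarith [hs ν hν, abs_of_nonpos n1, hA.mul_apply_le_abs_left hx ν 1,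
        abs_le.1 (hν.abs_apply_le_one hA 0)]
    · exact ⟨![1, δ, 0], by simp [tiltedCross], fun ν hν => (hdeg h0 h1 ν hν).elim⟩
    · refine ⟨-![-δ, 1, 0], by simp [tiltedCross], fun ν hν => ?_⟩
      have p1 := hν.apply_nonneg hu hx h1
      simp [dotProduct, Fin.sum_univ_three]
      nlinarith [hs ν hν, abs_of_nonneg p1, hA.mul_apply_le_abs_left hx ν 1,
        abs_le.1 (hν.abs_apply_le_one hA 0)]
  · rcases lt_trichotomy (x 0) 0 with h0 | h0 | h0
    · refine ⟨![1, δ, 0], by simp [tiltedCross], fun ν hν => ?_⟩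
      have n0 := hν.apply_nonpos hu hx h0
      simp [dotProduct, Fin.sum_univ_three]
      nlinarith [hs ν hν, abs_of_nonpos n0, hA.mul_apply_le_abs_left hx ν 0,
        abs_le.1 (hν.abs_apply_le_one hA 1)]
    · exact ⟨![1, δ, 0], by simp [tiltedCross], fun ν hν => (hdeg h0 h1 ν hν).elim⟩
    · refine ⟨-![1, δ, 0], by simp [tiltedCross], fun ν hν => ?_⟩
      have p0 := hν.apply_nonneg hu hx h0
      simp [dotProduct, Fin.sum_univ_three]
      nlinarith [hs ν hν, abs_of_nonneg p0, hA.mul_apply_le_abs_left hx ν 0,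
        abs_le.1 (hν.abs_apply_le_one hA 1)]

theorem exists_illuminatesSet_tiltedCross (hA : memU A)
    (hpairs : ∀ i j : Fin 3, i ≠ j → stdB i + stdB j ∉ A) (h2 : ¬ HasSideNormalAtTop A 2) :
    ∃ δ, 0 < δ ∧ δ < 1 ∧ IlluminatesSet A (tiltedCross δ) := by
  obtain ⟨β₀, hβ₀, hβ₀A⟩ := hA.exists_min_abs_le (i := 2) (j := 0) (by decide)
    (hpairs 2 0 (by decide))
  obtain ⟨β₁, hβ₁, hβ₁A⟩ := hA.exists_min_abs_le (i := 2) (j := 1) (by decide)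
    (hpairs 2 1 (by decide))
  set β := max (max β₀ β₁) 0
  have hβ : 0 ≤ β ∧ β < 1 := ⟨le_max_right _ _, max_lt (max_lt hβ₀ hβ₁) one_pos⟩
  have hβ₀β : β₀ ≤ β := (le_max_left _ _).trans (le_max_left _ _)
  have hβ₁β : β₁ ≤ β := (le_max_right _ _).trans (le_max_left _ _)
  refine ⟨(1 - β) / 2, by linarith, by linarith, fun x hx => ?_⟩
  have hxA := hA.isClosed.frontier_subset hx
  suffices ∃ d ∈ tiltedCross ((1 - β) / 2), ∀ ν, IsOuterNormal A ν x → ν ⬝ᵥ d < 0 by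
    obtain ⟨d, hd, hνd⟩ := this
    exact ⟨d, hd, illuminates_of_forall_isOuterNormal hA.1.1 hA.zero_mem_interior_s7 hx hνd⟩
  by_cases hvert : ∀ ν, IsOuterNormal A ν x → 0 < ν 2 * x 2
  · exact exists_vertical_direction hvert
  obtain ⟨ν, hν, hν2⟩ : ∃ ν, IsOuterNormal A ν x ∧ ν 2 * x 2 ≤ 0 := by simpa using hvert
  have hx2 : |x 2| < 1 := (hA.abs_le_one hxA 2).lt_of_ne fun h =>
    h2 (hA.hasSideNormalAtTop hxA hν hν2 h)
  have hax : x 0 = 0 ∨ x 1 = 0 → |x 2| ≤ β := fun hax => by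
    by_contra! hβx
    have h0 := (min_le_iff.1 (hβ₀A x hxA)).resolve_left (by linarith)
    have h1 := (min_le_iff.1 (hβ₁A x hxA)).resolve_left (by linarith)
    have := hν.2
    rw [dotProduct, Fin.sum_univ_three] at this
    rcases hax with h | h <;> rw [h, mul_zero] at this <;>
      linarith [hν.mul_apply_le_abs_right hA 0, hν.mul_apply_le_abs_right hA 1]
  by_cases hne : x 0 ≠ 0 ∧ x 1 ≠ 0
  · exact exists_planar_direction_of_ne_zero hA (by linarith) (by linarith) hxA hx2 hne.1 hne.2
  · exact exists_planar_direction_of_eq_zero hA (by linarith) hxA (by linarith [hax (by tauto)])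
      (by tauto)

end Dim3

/-- If `B ∈ 𝒰³` contains no point `e_i + e_j` (`i ≠ j`), then some
coordinate permutation of `{±(1,δ,0), ±(-δ,1,0), ±(0,0,1)}` illuminates `B`, for
a suitable `δ ∈ (0,1)`; in particular `𝕀(B) ≤ 6`. -/
theorem stmt7 (B : Set (Fin 3 → ℝ)) (hB : memU B)
    (hpairs : ∀ i j : Fin 3, i ≠ j → stdB i + stdB j ∉ B) :
    ∃ δ : ℝ, 0 < δ ∧ δ < 1 ∧ ∃ σ : Equiv.Perm (Fin 3),
      IlluminatesSet B ((fun d => d ∘ σ) ''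
        ({![1, δ, 0], -![1, δ, 0], ![-δ, 1, 0], -![-δ, 1, 0],
          ![0, 0, 1], -![0, 0, 1]} : Set (Fin 3 → ℝ))) ∧
      illumNumber B ≤ 6 := by
  obtain ⟨k, hk⟩ := exists_not_hasSideNormalAtTop hB hpairs
  set σ : Equiv.Perm (Fin 3) := Equiv.swap k 2
  obtain ⟨δ, hδ, hδ1, hill⟩ := exists_illuminatesSet_tiltedCross (hB.image_permuteCoords σ.symm)
    (fun _ _ => stdB_add_stdB_notMem_image_permuteCoords hpairs σ.symm)
    (fun h => hk (by simpa [σ] using h.of_image_permuteCoords))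
  have hillB : IlluminatesSet B (permuteCoords σ '' tiltedCross δ) := by
    simpa [Set.image_image, Function.comp_assoc] using hill.image (permuteCoords σ)
  refine ⟨δ, hδ, hδ1, σ, hillB, ?_⟩
  classical
  let D : Finset (Fin 3 → ℝ) := Finset.image (permuteCoords σ)
    {![1, δ, 0], -![1, δ, 0], ![-δ, 1, 0], -![-δ, 1, 0], ![0, 0, 1], -![0, 0, 1]}
  have hD : ∀ d ∈ D, d ≠ 0 := by
    simp only [D, Finset.mem_image]
    rintro _ ⟨d, hd, rfl⟩
    rw [Ne, (permuteCoords σ).map_eq_zero_iff]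
    rintro rfl
    simp [funext_iff, Fin.forall_fin_succ] at hd
  have hDB : IlluminatesSet B D := by
    rw [Finset.coe_image]; push_cast; exact hillB
  calc illumNumber B ≤ D.card := Nat.sInf_le ⟨D, rfl, hD, hDB⟩
    _ ≤ 6 := Finset.card_image_le.trans Finset.card_le_six
end

section
/- Let n ≥ 3, let K be a convex body in ℝ^n, and let H be an affine hyperplane of ℝ^n such that (i) the projection of K onto H along a normal direction of H equals K ∩ H, and (ii) K has no extreme points lying in H. Let D be a finite set of nonzero vectors parallel to H such that every point of the relative boundary of K ∩ H is illuminated within H by some d ∈ D (i.e., for each such p there exist d ∈ D and ε > 0 with p + εd in the relative interior of K ∩ H). Then there exists a set D′ of nonzero directions in ℝ^n with |D′| ≤ 2|D| that illuminates K. In particular, 𝕀(K) ≤ 2·𝕀(K ∩ H), where 𝕀(K ∩ H) is the illumination number of K ∩ H regarded as an (n−1)-dimensional convex body in H. -/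
open Set

/-- The relative illumination number of a (lower-dimensional) convex set `A`:
smallest cardinality of a set of nonzero directions pushing each point of the
relative (intrinsic) boundary of `A` into the relative (intrinsic) interior. -/
noncomputable def relIllumNumber {n : ℕ} (A : Set (Fin n → ℝ)) : ℕ :=
  sInf {m | ∃ D : Finset (Fin n → ℝ), D.card = m ∧ (∀ d ∈ D, d ≠ 0) ∧
    ∀ p ∈ intrinsicFrontier ℝ A, ∃ d ∈ D, ∃ ε : ℝ, 0 < ε ∧
      p + ε • d ∈ intrinsicInterior ℝ A}

/-!
Write `H = {φ = c}` and `C = K ∩ H`. If `e` is an extreme point of `C`, it is not extreme in `K`,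
and projecting a segment of `K` through `e` along `v` shows that `e` lies inside a vertical chord
of `K`. Points of `C` with this property form a convex set, so by Minkowski's theorem every point
of `C` lies inside a vertical chord of `K`; since moreover `K` projects onto `C`, the relative
interior of `C` lies in the interior of `K`. Hence every point of `C` is illuminated in `K` by a
direction of `D` (on the relative interior by any one of them, and `D` is nonempty because `C` is
at least one-dimensional, so has a relative boundary), uniformly for all step lengths below some
`ρ > 0` by compactness.

A boundary point `x = q + σ • v` of `K`, with `q ∈ C`, is now illuminated by `d + δ • v` if
`σ < 0` and by `d - δ • v` if `σ > 0`, where `δ` is so large that `|σ| / δ < ρ`: after time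
`|σ| / δ` the point reaches `q + (|σ| / δ) • d`. If `σ = 0`, the direction `d + δ • v` still works,
through convex combinations of `q + t • d` with the top of the vertical chord through `q`.
-/

open Filter Topology Module Pointwise

section ConvexSets

variable {E : Type*} [NormedAddCommGroup E] [NormedSpace ℝ E]

theorem exists_pos_add_smul_mem_of_eventually {s : Set E} {x d : E}
    (h : ∀ᶠ t in 𝓝 (0 : ℝ), x + t • d ∈ s) : ∃ t : ℝ, 0 < t ∧ x + t • d ∈ s := by
  obtain ⟨t, ht, hts⟩ := ((h.filter_mono nhdsWithin_le_nhds).and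
    (self_mem_nhdsWithin (s := Ioi 0))).exists
  exact ⟨t, hts, ht⟩

theorem exists_pos_add_smul_mem_of_mem_nhds {s : Set E} {x : E} (hs : s ∈ 𝓝 x) (d : E) :
    ∃ t : ℝ, 0 < t ∧ x + t • d ∈ s :=
  exists_pos_add_smul_mem_of_eventually
    (((continuous_const.add (continuous_id.smul continuous_const)).tendsto' 0 x
      (by simp)).eventually hs)

theorem IsClosed.intrinsicInterior_union_intrinsicFrontier {s : Set E} (hs : IsClosed s) :
    intrinsicInterior ℝ s ∪ intrinsicFrontier ℝ s = s := by
  rw [_root_.intrinsicInterior_union_intrinsicFrontier,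
    (hs.preimage continuous_subtype_val).intrinsicClosure]

theorem IsCompact.exists_add_smul_mem_forall_lt {C : Set E} (hC : IsCompact C) {p u : E}
    (hp : p ∈ C) (hu : u ≠ 0) :
    ∃ t : ℝ, p + t • u ∈ C ∧ ∀ s : ℝ, t < s → p + s • u ∉ C := by
  have hemb : Topology.IsClosedEmbedding fun t : ℝ => p + t • u :=
    (Homeomorph.addLeft p).isClosedEmbedding.comp (isClosedEmbedding_smul_left hu)
  obtain ⟨t, htC, htmax⟩ :=
    (hemb.isCompact_preimage hC).exists_isGreatest ⟨0, by simpa using hp⟩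
  exact ⟨t, htC, fun s hts hs => (htmax hs).not_gt hts⟩

theorem Convex.exists_forall_le_of_notMem_interior {C : Set E} (hC : Convex ℝ C)
    (hint : (interior C).Nonempty) {y : E} (hy : y ∉ interior C) :
    ∃ l : StrongDual ℝ E, (∀ z ∈ C, l z ≤ l y) ∧ ∀ z ∈ interior C, l z < l y := by
  obtain ⟨l, hl⟩ := geometric_hahn_banach_open_point hC.interior isOpen_interior hy
  have : closure (interior C) ⊆ {z | l z ≤ l y} :=
    closure_minimal (fun z hz => (hl z hz).le) (isClosed_le l.continuous continuous_const)
  rw [hC.closure_interior_eq_closure_of_nonempty_interior hint] at this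
  exact ⟨l, fun z hz => this (subset_closure hz), hl⟩

variable [FiniteDimensional ℝ E]

theorem Convex.exists_forall_le_of_forall_add_smul_notMem {C : Set E} (hC : Convex ℝ C)
    {y u : E} (hy : y ∈ C) (hu : u ∈ vectorSpan ℝ C) (hray : ∀ ε : ℝ, 0 < ε → y + ε • u ∉ C) :
    ∃ l : StrongDual ℝ E, (∀ z ∈ C, l z ≤ l y) ∧ ∃ w ∈ vectorSpan ℝ C, l w ≠ 0 := by
  -- thicken `C` by a complement of its direction to get a body with nonempty interior
  obtain ⟨W', hW'⟩ := Submodule.exists_isCompl (vectorSpan ℝ C)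
  set C' := C + (W' : Set E)
  have hC' : Convex ℝ C' := hC.add W'.convex
  have hyC' : ∀ w ∈ W', y + w ∈ C' := fun w hw => add_mem_add hy hw
  have hy' : y ∈ C' := by simpa using hyC' 0 W'.zero_mem
  have hspan : vectorSpan ℝ C' = ⊤ := by
    rw [eq_top_iff, ← hW'.sup_eq_top]
    refine sup_le (vectorSpan_mono ℝ fun x hx => by simpa using add_mem_add hx W'.zero_mem)
      fun w hw => ?_
    simpa using vsub_mem_vectorSpan ℝ (hyC' w hw) hy'
  obtain ⟨z₀, hz₀⟩ : (interior C').Nonempty := by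
    rwa [hC'.interior_nonempty_iff_affineSpan_eq_top,
      AffineSubspace.affineSpan_eq_top_iff_vectorSpan_eq_top_of_nonempty ℝ E E ⟨y, hy'⟩]
  have hyint : y ∉ interior C' := by
    intro hyint
    obtain ⟨ε, hε, b, hb, w, hw, hbw⟩ :=
      exists_pos_add_smul_mem_of_mem_nhds (mem_interior_iff_mem_nhds.mp hyint) u
    have hwW : w ∈ vectorSpan ℝ C := by
      have : w = (y -ᵥ b) + ε • u := by rw [vsub_eq_sub]; linear_combination (norm := module) hbw
      exact this ▸ add_mem (vsub_mem_vectorSpan ℝ hy hb) (Submodule.smul_mem _ ε hu)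
    have hw0 : w = 0 := by simpa using hW'.inf_eq_bot.le ⟨hwW, hw⟩
    have hb' : b = y + ε • u := by simpa [hw0] using hbw
    exact hray ε hε (hb' ▸ hb)
  obtain ⟨l, hle, hl⟩ := hC'.exists_forall_le_of_notMem_interior ⟨z₀, hz₀⟩ hyint
  have hW'ker : ∀ w ∈ W', l w = 0 := by
    intro w hw
    have h₁ := hle _ (hyC' w hw)
    have h₂ := hle _ (hyC' (-w) (W'.neg_mem hw))
    simp only [map_add, map_neg] at h₁ h₂
    linarith
  refine ⟨l, fun z hz => hle z (by simpa using add_mem_add hz W'.zero_mem), ?_⟩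
  obtain ⟨w, hw, w', hw', hww'⟩ :=
    Submodule.mem_sup.mp (hW'.sup_eq_top ▸ Submodule.mem_top : z₀ - y ∈ vectorSpan ℝ C ⊔ W')
  refine ⟨w, hw, fun h => ?_⟩
  have := congrArg l hww'
  rw [map_add, map_sub, h, hW'ker w' hw'] at this
  linarith [hl z₀ hz₀]

theorem finrank_vectorSpan_toExposed_lt {C : Set E} (l : StrongDual ℝ E) {w : E}
    (hw : w ∈ vectorSpan ℝ C) (hlw : l w ≠ 0) :
    finrank ℝ (vectorSpan ℝ (l.toExposed C)) < finrank ℝ (vectorSpan ℝ C) := by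
  have hle : vectorSpan ℝ (l.toExposed C) ≤ LinearMap.ker (l : E →ₗ[ℝ] ℝ) ⊓ vectorSpan ℝ C := by
    refine le_inf ?_ (vectorSpan_mono ℝ fun _ h => h.1)
    rw [vectorSpan_def, Submodule.span_le]
    rintro _ ⟨a, ha, b, hb, rfl⟩
    simp only [SetLike.mem_coe, LinearMap.mem_ker, ContinuousLinearMap.coe_coe, vsub_eq_sub,
      map_sub, sub_eq_zero]
    exact le_antisymm (hb.2 a ha.1) (ha.2 b hb.1)
  have hlt : LinearMap.ker (l : E →ₗ[ℝ] ℝ) ⊓ vectorSpan ℝ C < vectorSpan ℝ C :=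
    inf_le_right.lt_of_ne fun h => hlw (Submodule.mem_inf.mp (h.symm ▸ hw)).1
  exact (Submodule.finrank_mono hle).trans_lt (Submodule.finrank_lt_finrank_of_lt hlt)

theorem IsCompact.subset_convexHull_extremePoints_s16 {C : Set E} (hC : IsCompact C)
    (hCconv : Convex ℝ C) : C ⊆ convexHull ℝ (C.extremePoints ℝ) := by
  induction hk : finrank ℝ (vectorSpan ℝ C) using Nat.strong_induction_on generalizing C with
  | _ k ih =>
  intro p hp
  by_cases hpext : p ∈ C.extremePoints ℝ
  · exact subset_convexHull ℝ _ hpext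
  have hface : ∀ y ∈ C, ∀ u ∈ vectorSpan ℝ C, (∀ ε : ℝ, 0 < ε → y + ε • u ∉ C) →
      y ∈ convexHull ℝ (C.extremePoints ℝ) := by
    intro y hy u hu hray
    obtain ⟨l, hl, w, hw, hlw⟩ := hCconv.exists_forall_le_of_forall_add_smul_notMem hy hu hray
    have hexp := ContinuousLinearMap.toExposed.isExposed (l := l) (A := C)
    refine convexHull_mono hexp.isExtreme.extremePoints_subset_extremePoints <|
      ih _ (hk ▸ finrank_vectorSpan_toExposed_lt l hw hlw) (hexp.isCompact hC)
        (hexp.convex hCconv) rfl ⟨hy, hl⟩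
  rw [mem_extremePoints] at hpext
  push Not at hpext
  obtain ⟨x₁, hx₁, x₂, hx₂, ⟨a, b, ha, hb, hab, hpab⟩, hne⟩ := hpext hp
  set u := x₂ - x₁
  have hu : u ≠ 0 := by
    intro h
    obtain rfl : x₂ = x₁ := sub_eq_zero.mp h
    rw [← add_smul, hab, one_smul] at hpab
    exact hne hpab hpab
  have huC : u ∈ vectorSpan ℝ C := vsub_mem_vectorSpan ℝ hx₂ hx₁
  have hx₂eq : p + a • u = x₂ := by
    rw [← hpab]; simp only [u]; linear_combination (norm := module) hab • x₂
  have hx₁eq : p + b • (-u) = x₁ := by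
    rw [← hpab]; simp only [u]; linear_combination (norm := module) hab • x₁
  obtain ⟨s, hsC, hsmax⟩ := hC.exists_add_smul_mem_forall_lt hp hu
  obtain ⟨t, htC, htmax⟩ := hC.exists_add_smul_mem_forall_lt hp (neg_ne_zero.mpr hu)
  have has : a ≤ s := not_lt.mp fun h => hsmax a h (by rwa [hx₂eq])
  have hbt : b ≤ t := not_lt.mp fun h => htmax b h (by rwa [hx₁eq])
  have hP := hface _ hsC u huC fun ε hε h => hsmax (s + ε) (by linarith) (by
    rwa [add_smul, ← add_assoc])
  have hM := hface _ htC (-u) (neg_mem huC) fun ε hε h => htmax (t + ε) (by linarith) (by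
    rwa [add_smul, ← add_assoc])
  have hst : 0 < s + t := by linarith
  convert (convex_convexHull ℝ _) hP hM (a := t / (s + t)) (b := s / (s + t))
    (div_nonneg (by linarith) hst.le) (div_nonneg (by linarith) hst.le) (by field_simp; ring)
    using 1
  match_scalars <;> field_simp <;> ring

end ConvexSets

section ObliqueProjection

variable {E : Type*} [NormedAddCommGroup E] [NormedSpace ℝ E]

noncomputable def obliqueProj (φ : StrongDual ℝ E) (v : E) (c : ℝ) (x : E) : E :=
  x - ((φ x - c) / φ v) • v

variable {K : Set E} {φ : StrongDual ℝ E} {v : E} {c : ℝ}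

theorem apply_obliqueProj (hv : φ v ≠ 0) (x : E) : φ (obliqueProj φ v c x) = c := by
  simp only [obliqueProj, map_sub, map_smul, smul_eq_mul]
  field_simp
  ring

theorem IsCompact.inter_setOf_apply_eq (hKc : IsCompact K) (φ : StrongDual ℝ E) (c : ℝ) :
    IsCompact (K ∩ {x | φ x = c}) :=
  hKc.inter_right (isClosed_eq φ.continuous continuous_const)

theorem apply_eq_zero_of_apply_add_smul_eq {p d : E} {ε : ℝ} (hp : φ p = c)
    (hpd : φ (p + ε • d) = c) (hε : ε ≠ 0) : φ d = 0 := by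
  rw [map_add, map_smul, hp, smul_eq_mul, add_eq_left, mul_eq_zero] at hpd
  exact hpd.resolve_left hε

theorem obliqueProj_add_smul (x : E) : obliqueProj φ v c x + ((φ x - c) / φ v) • v = x :=
  sub_add_cancel _ _

theorem Convex.eventually_add_smul_mem (hK : Convex ℝ K) {p : E} {a b : ℝ} (ha : a < 0)
    (hb : 0 < b) (hpa : p + a • v ∈ K) (hpb : p + b • v ∈ K) :
    ∀ᶠ t in 𝓝 (0 : ℝ), p + t • v ∈ K := by
  have hline : Convex ℝ {t : ℝ | p + t • v ∈ K} :=
    (hK.translate_preimage_right p).is_linear_preimage (IsLinearMap.isLinearMap_smul' v)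
  filter_upwards [Icc_mem_nhds ha hb] with t ht
  exact hline.ordConnected.out hpa hpb ht

theorem Convex.setOf_eventually_add_smul_mem (hK : Convex ℝ K) (v : E) :
    Convex ℝ {p | ∀ᶠ t in 𝓝 (0 : ℝ), p + t • v ∈ K} := by
  intro p₁ hp₁ p₂ hp₂ a b ha hb hab
  filter_upwards [hp₁, hp₂] with t ht₁ ht₂
  convert hK ht₁ ht₂ ha hb hab using 1
  linear_combination (norm := module) (-hab) • (t • v)

theorem eventually_add_smul_mem_of_mem_extremePoints_section (hK : Convex ℝ K) (hv : φ v ≠ 0)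
    (hproj : ∀ x ∈ K, obliqueProj φ v c x ∈ K) {e : E}
    (he : e ∈ (K ∩ {x | φ x = c}).extremePoints ℝ) (heK : e ∉ K.extremePoints ℝ) :
    ∀ᶠ t in 𝓝 (0 : ℝ), e + t • v ∈ K := by
  have heC := he.1
  rw [mem_extremePoints] at heK
  push Not at heK
  obtain ⟨x₁, hx₁, x₂, hx₂, ⟨a, b, ha, hb, hab, hex⟩, hne⟩ := heK heC.1
  set s₁ := (φ x₁ - c) / φ v
  set s₂ := (φ x₂ - c) / φ v
  have hs : a * s₁ + b * s₂ = 0 := by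
    have := congrArg φ hex
    rw [map_add, map_smul, map_smul, smul_eq_mul, smul_eq_mul, heC.2] at this
    simp only [s₁, s₂]
    field_simp
    linear_combination this - c * hab
  -- the projected segment still passes through `e`, so both ends project to `e`
  have hπ : a • obliqueProj φ v c x₁ + b • obliqueProj φ v c x₂ = e := by
    rw [← hex]
    simp only [obliqueProj]
    linear_combination (norm := module) hs • (-v)
  obtain ⟨h₁, h₂⟩ := (mem_extremePoints.mp he).2 _ ⟨hproj x₁ hx₁, apply_obliqueProj hv x₁⟩
    _ ⟨hproj x₂ hx₂, apply_obliqueProj hv x₂⟩ ⟨a, b, ha, hb, hab, hπ⟩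
  have hx₁e : e + s₁ • v = x₁ := h₁ ▸ obliqueProj_add_smul x₁
  have hx₂e : e + s₂ • v = x₂ := h₂ ▸ obliqueProj_add_smul x₂
  have hs₁ : s₁ ≠ 0 := by
    intro h0
    have hs₂ : s₂ = 0 := by simpa [h0, hb.ne'] using hs
    exact hne (by rw [← hx₁e, h0, zero_smul, add_zero]) (by rw [← hx₂e, hs₂, zero_smul, add_zero])
  rcases hs₁.lt_or_gt with hs₁ | hs₁
  · exact hK.eventually_add_smul_mem hs₁ (by nlinarith) (hx₁e ▸ hx₁) (hx₂e ▸ hx₂)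
  · exact hK.eventually_add_smul_mem (by nlinarith) hs₁ (hx₂e ▸ hx₂) (hx₁e ▸ hx₁)

theorem eventually_add_smul_mem_of_mem_section [FiniteDimensional ℝ E] (hK : Convex ℝ K)
    (hKc : IsCompact K) (hv : φ v ≠ 0) (hproj : ∀ x ∈ K, obliqueProj φ v c x ∈ K)
    (hext : ∀ x ∈ K.extremePoints ℝ, φ x ≠ c) {p : E} (hp : p ∈ K ∩ {x | φ x = c}) :
    ∀ᶠ t in 𝓝 (0 : ℝ), p + t • v ∈ K := by
  have hC := hKc.inter_setOf_apply_eq φ c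
  have hCconv : Convex ℝ (K ∩ {x | φ x = c}) :=
    hK.inter (convex_hyperplane φ.toLinearMap.isLinear c)
  refine convexHull_min (fun e he => ?_) (hK.setOf_eventually_add_smul_mem v)
    (hC.subset_convexHull_extremePoints_s16 hCconv hp)
  exact eventually_add_smul_mem_of_mem_extremePoints_section hK hv hproj he
    fun heK => hext e heK he.1.2

theorem setOf_apply_eq_subset_affineSpan (hint : (interior K).Nonempty) (hv : φ v ≠ 0)
    (hproj : ∀ x ∈ K, obliqueProj φ v c x ∈ K) :
    {x | φ x = c} ⊆ affineSpan ℝ (K ∩ {x | φ x = c}) := by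
  obtain ⟨z₀, hz₀⟩ := hint
  set q₀ := obliqueProj φ v c z₀
  have hq₀ : q₀ ∈ K ∩ {x | φ x = c} := ⟨hproj z₀ (interior_subset hz₀), apply_obliqueProj hv z₀⟩
  intro z hz
  have hw : φ (z - q₀) = 0 := by rw [map_sub, hz, apply_obliqueProj hv, sub_self]
  obtain ⟨ε, hε, hεK⟩ := exists_pos_add_smul_mem_of_mem_nhds (isOpen_interior.mem_nhds hz₀) (z - q₀)
  have hq₁ : q₀ + ε • (z - q₀) ∈ K ∩ {x | φ x = c} := by
    have h : obliqueProj φ v c (z₀ + ε • (z - q₀)) = q₀ + ε • (z - q₀) := by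
      rw [obliqueProj, map_add, map_smul, hw, smul_zero, add_zero]
      simp only [q₀, obliqueProj]
      abel
    exact h ▸ ⟨hproj _ (interior_subset hεK), apply_obliqueProj hv _⟩
  have hdir : z - q₀ ∈ (affineSpan ℝ (K ∩ {x | φ x = c})).direction := by
    rw [direction_affineSpan]
    have := Submodule.smul_mem _ ε⁻¹ (vsub_mem_vectorSpan ℝ hq₁ hq₀)
    rwa [vsub_eq_sub, add_sub_cancel_left, smul_smul, inv_mul_cancel₀ hε.ne', one_smul] at this
  simpa using AffineSubspace.vadd_mem_of_mem_direction hdir (subset_affineSpan ℝ _ hq₀)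

theorem eventually_mem_of_mem_intrinsicInterior {s : Set E} {x : E}
    (hx : x ∈ intrinsicInterior ℝ s) : ∀ᶠ y in 𝓝 x, y ∈ affineSpan ℝ s → y ∈ s := by
  obtain ⟨y, hy, rfl⟩ := hx
  rw [mem_interior_iff_mem_nhds] at hy
  exact eventually_nhdsWithin_iff.mp ((eventually_nhds_subtype_iff _ y (· ∈ s)).mp hy)

theorem Convex.mem_interior_of_eventually_mem_hyperplane (hK : Convex ℝ K) (hv : φ v ≠ 0) {q : E}
    (hslice : ∀ᶠ z in 𝓝 q, φ z = φ q → z ∈ K) (hline : ∀ᶠ t in 𝓝 (0 : ℝ), q + t • v ∈ K) :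
    q ∈ interior K := by
  set σ : E → ℝ := fun x => (φ x - φ q) / φ v
  set z : E → E := fun x => (2 : ℝ) • (x - σ x • v) - q
  have hσ : Continuous σ := by fun_prop
  have hφz : ∀ x, φ (z x) = φ q := by
    intro x
    simp only [z, σ, map_sub, map_smul, smul_eq_mul]
    field_simp
    ring
  have hz : Tendsto z (𝓝 q) (𝓝 q) := by
    refine Continuous.tendsto' (by fun_prop) q q ?_
    simp only [z, σ, sub_self, zero_div, zero_smul, sub_zero]
    module
  have h2σ : Tendsto (fun x => 2 * σ x) (𝓝 q) (𝓝 0) :=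
    (continuous_const.mul hσ).tendsto' q 0 (by simp [σ])
  rw [mem_interior_iff_mem_nhds]
  filter_upwards [hz.eventually hslice, h2σ.eventually hline] with x hx₁ hx₂
  -- `x` is the midpoint of a point of the slice and a point of the line through `q`
  convert hK (hx₁ (hφz x)) hx₂ (by norm_num : (0 : ℝ) ≤ 1 / 2) (by norm_num : (0 : ℝ) ≤ 1 / 2)
    (by norm_num) using 1
  simp only [z]
  module

theorem intrinsicInterior_section_subset_interior [FiniteDimensional ℝ E] (hK : Convex ℝ K)
    (hKc : IsCompact K) (hint : (interior K).Nonempty) (hv : φ v ≠ 0)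
    (hproj : ∀ x ∈ K, obliqueProj φ v c x ∈ K) (hext : ∀ x ∈ K.extremePoints ℝ, φ x ≠ c) :
    intrinsicInterior ℝ (K ∩ {x | φ x = c}) ⊆ interior K := by
  intro q hq
  have hqC := intrinsicInterior_subset hq
  refine hK.mem_interior_of_eventually_mem_hyperplane hv ?_
    (eventually_add_smul_mem_of_mem_section hK hKc hv hproj hext hqC)
  filter_upwards [eventually_mem_of_mem_intrinsicInterior hq] with z hz hzq
  exact (hz (setOf_apply_eq_subset_affineSpan hint hv hproj (hzq.trans hqC.2))).1

end ObliqueProjection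

section Illumination

variable {E : Type*} [NormedAddCommGroup E] [NormedSpace ℝ E]

theorem Convex.add_smul_mem_interior_of_le {K : Set E} (hK : Convex ℝ K) {x d : E} {ε t : ℝ}
    (hx : x ∈ K) (hε : x + ε • d ∈ interior K) (ht : 0 < t) (htε : t ≤ ε) :
    x + t • d ∈ interior K := by
  have hε₀ : 0 < ε := ht.trans_le htε
  have := hK.add_smul_mem_interior hx hε ⟨div_pos ht hε₀, (div_le_one hε₀).mpr htε⟩
  rwa [smul_smul, div_mul_cancel₀ _ hε₀.ne'] at this

theorem IsCompact.exists_pos_forall_add_smul_mem_interior {K C D : Set E} (hK : Convex ℝ K)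
    (hC : IsCompact C) (hCK : C ⊆ K)
    (hD : ∀ q ∈ C, ∃ d ∈ D, ∃ ε : ℝ, 0 < ε ∧ q + ε • d ∈ interior K) :
    ∃ ρ : ℝ, 0 < ρ ∧ ∀ t ∈ Ioo 0 ρ, ∀ q ∈ C, ∃ d ∈ D, q + t • d ∈ interior K := by
  have hev := hC.eventually_forall_of_forall_eventually (x₀ := (0 : ℝ))
    (P := fun t y => y ∈ K → 0 < t → ∃ d ∈ D, y + t • d ∈ interior K) fun q hq => by
      obtain ⟨d, hd, ε, hε, hqε⟩ := hD q hq
      have hcont : Tendsto (fun z : ℝ × E => z.2 + ε • d) (𝓝 (0, q)) (𝓝 (q + ε • d)) :=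
        (continuous_snd.add continuous_const).tendsto' _ _ rfl
      filter_upwards [hcont.eventually (isOpen_interior.mem_nhds hqε),
        continuous_fst.tendsto' (0, q) 0 rfl |>.eventually (gt_mem_nhds hε)]
        with z hzε hzlt hzK hz
      exact ⟨d, hd, hK.add_smul_mem_interior_of_le hzK hzε hz hzlt.le⟩
  obtain ⟨ρ, hρ, hρev⟩ := Metric.eventually_nhds_iff.mp hev
  refine ⟨ρ, hρ, fun t ht q hq => hρev ?_ q hq (hCK hq) ht.1⟩
  rw [Real.dist_eq, sub_zero, abs_of_pos ht.1]
  exact ht.2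

variable [FiniteDimensional ℝ E] {K : Set E} {φ : StrongDual ℝ E} {v : E} {c : ℝ}

theorem intrinsicFrontier_section_nonempty (hE : 2 ≤ finrank ℝ E) (hK : Convex ℝ K)
    (hKc : IsCompact K) (hint : (interior K).Nonempty) (hv : φ v ≠ 0)
    (hproj : ∀ x ∈ K, obliqueProj φ v c x ∈ K) (hext : ∀ x ∈ K.extremePoints ℝ, φ x ≠ c) :
    (intrinsicFrontier ℝ (K ∩ {x | φ x = c})).Nonempty := by
  set C := K ∩ {x | φ x = c}
  have hC : IsCompact C := hKc.inter_setOf_apply_eq φ c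
  obtain ⟨w, hw, hw0⟩ := Submodule.exists_mem_ne_zero_of_ne_bot
    (LinearMap.ker_ne_bot_of_finrank_lt (f := (φ : E →ₗ[ℝ] ℝ)) (by rw [finrank_self]; omega))
  obtain ⟨z₀, hz₀⟩ := hint
  have hq₀ : obliqueProj φ v c z₀ ∈ C := ⟨hproj _ (interior_subset hz₀), apply_obliqueProj hv _⟩
  -- a point of `C` that is extreme in the direction `w` cannot lie in `interior K`
  obtain ⟨t, htC, htmax⟩ := hC.exists_add_smul_mem_forall_lt hq₀ hw0
  by_contra hempty
  have hri : obliqueProj φ v c z₀ + t • w ∈ intrinsicInterior ℝ C := by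
    have h := hC.isClosed.intrinsicInterior_union_intrinsicFrontier
    rw [not_nonempty_iff_eq_empty.mp hempty, union_empty] at h
    rwa [h]
  obtain ⟨ε, hε, hεK⟩ := exists_pos_add_smul_mem_of_mem_nhds (isOpen_interior.mem_nhds
    (intrinsicInterior_section_subset_interior hK hKc ⟨z₀, hz₀⟩ hv hproj hext hri)) w
  refine htmax (t + ε) (lt_add_of_pos_right t hε) ⟨?_, ?_⟩
  · rw [add_smul, ← add_assoc]
    exact interior_subset hεK
  · have hφw : φ w = 0 := hw
    change φ _ = c
    simp only [map_add, map_smul, hφw, smul_zero, add_zero]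
    exact apply_obliqueProj hv z₀

theorem exists_illuminating_of_mem_section (hE : 2 ≤ finrank ℝ E) (hK : Convex ℝ K)
    (hKc : IsCompact K) (hint : (interior K).Nonempty) (hv : φ v ≠ 0)
    (hproj : ∀ x ∈ K, obliqueProj φ v c x ∈ K) (hext : ∀ x ∈ K.extremePoints ℝ, φ x ≠ c)
    {D : Set E} (hD : ∀ p ∈ intrinsicFrontier ℝ (K ∩ {x | φ x = c}), ∃ d ∈ D, ∃ ε : ℝ, 0 < ε ∧
      p + ε • d ∈ intrinsicInterior ℝ (K ∩ {x | φ x = c}))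
    {q : E} (hq : q ∈ K ∩ {x | φ x = c}) :
    ∃ d ∈ D, ∃ ε : ℝ, 0 < ε ∧ q + ε • d ∈ interior K := by
  have hsub := intrinsicInterior_section_subset_interior hK hKc hint hv hproj hext
  rw [← (hKc.inter_setOf_apply_eq φ c).isClosed.intrinsicInterior_union_intrinsicFrontier] at hq
  rcases hq with hq | hq
  · obtain ⟨p, hp⟩ := intrinsicFrontier_section_nonempty hE hK hKc hint hv hproj hext
    obtain ⟨d, hd, -⟩ := hD p hp
    exact ⟨d, hd, exists_pos_add_smul_mem_of_mem_nhds (isOpen_interior.mem_nhds (hsub hq)) d⟩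
  · obtain ⟨d, hd, ε, hε, hqε⟩ := hD q hq
    exact ⟨d, hd, ε, hε, hsub hqε⟩

theorem exists_illuminating_finset_of_section (hE : 2 ≤ finrank ℝ E) (hK : Convex ℝ K)
    (hKc : IsCompact K) (hint : (interior K).Nonempty) (hv : φ v ≠ 0)
    (hproj : ∀ x ∈ K, obliqueProj φ v c x ∈ K) (hext : ∀ x ∈ K.extremePoints ℝ, φ x ≠ c)
    {D : Finset E} (hD : ∀ p ∈ intrinsicFrontier ℝ (K ∩ {x | φ x = c}), ∃ d ∈ D, ∃ ε : ℝ, 0 < ε ∧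
      p + ε • d ∈ intrinsicInterior ℝ (K ∩ {x | φ x = c})) :
    ∃ D' : Finset E, (∀ d ∈ D', d ≠ 0) ∧ D'.card ≤ 2 * D.card ∧
      ∀ x ∈ frontier K, ∃ d ∈ D', ∃ ε : ℝ, 0 < ε ∧ x + ε • d ∈ interior K := by
  classical
  have hD₁ : ∀ p ∈ intrinsicFrontier ℝ (K ∩ {x | φ x = c}),
      ∃ d ∈ D.filter (φ · = 0), ∃ ε : ℝ, 0 < ε ∧
        p + ε • d ∈ intrinsicInterior ℝ (K ∩ {x | φ x = c}) := by
    intro p hp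
    obtain ⟨d, hd, ε, hε, hpd⟩ := hD p hp
    have hpC := intrinsicFrontier_subset (hKc.inter_setOf_apply_eq φ c).isClosed hp
    refine ⟨d, Finset.mem_filter.mpr ⟨hd, ?_⟩, ε, hε, hpd⟩
    exact apply_eq_zero_of_apply_add_smul_eq hpC.2 (intrinsicInterior_subset hpd).2 hε.ne'
  obtain ⟨ρ, hρ, hill⟩ := (hKc.inter_setOf_apply_eq φ c).exists_pos_forall_add_smul_mem_interior
    hK inter_subset_left fun q hq => exists_illuminating_of_mem_section hE hK hKc hint hv hproj
      hext hD₁ hq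
  obtain ⟨M, hM⟩ := hKc.exists_bound_of_continuousOn (f := fun x => (φ x - c) / φ v)
    (by fun_prop)
  -- steep enough that every point of `K` reaches `H` along `d ± δ • v` within parameter `ρ`
  set δ := (|M| + 1) / ρ
  have hδ : 0 < δ := by positivity
  set D₁ := D.filter (φ · = 0)
  refine ⟨D₁.image (· + δ • v) ∪ D₁.image (· - δ • v), ?_, ?_, ?_⟩
  · simp only [Finset.mem_union, Finset.mem_image]
    rintro _ (⟨d, hd, rfl⟩ | ⟨d, hd, rfl⟩) h0 <;>
      simpa [(Finset.mem_filter.mp hd).2, hδ.ne', hv] using congrArg φ h0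
  · calc _ ≤ (D₁.image (· + δ • v)).card + (D₁.image (· - δ • v)).card :=
          Finset.card_union_le _ _
      _ ≤ 2 * D.card := by
        linarith [D₁.card_image_le (f := (· + δ • v)), D₁.card_image_le (f := (· - δ • v)),
          D.card_filter_le (φ · = 0)]
  intro x hx
  have hxK : x ∈ K := hKc.isClosed.frontier_subset hx
  set q := obliqueProj φ v c x
  set σ := (φ x - c) / φ v
  have hq : q ∈ K ∩ {x | φ x = c} := ⟨hproj x hxK, apply_obliqueProj hv x⟩
  have hxq : x = q + σ • v := (obliqueProj_add_smul x).symm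
  have hσρ : |σ| / δ < ρ := by
    rw [div_lt_iff₀ hδ]
    simp only [δ]
    field_simp
    linarith [hM x hxK, le_abs_self M, Real.norm_eq_abs σ]
  rcases lt_trichotomy σ 0 with hσ | hσ | hσ
  · obtain ⟨d, hd, hqd⟩ :=
      hill (-σ / δ) ⟨div_pos (neg_pos.mpr hσ) hδ, by rwa [abs_of_neg hσ] at hσρ⟩ q hq
    refine ⟨d + δ • v, Finset.mem_union_left _ (Finset.mem_image_of_mem _ hd), -σ / δ,
      div_pos (neg_pos.mpr hσ) hδ, ?_⟩
    convert hqd using 1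
    rw [hxq, smul_add, smul_smul, div_mul_cancel₀ _ hδ.ne']
    module
  · obtain ⟨d, hd, hqd⟩ := hill (ρ / 2) ⟨by positivity, by linarith⟩ q hq
    obtain ⟨h, hh, hqh⟩ := exists_pos_add_smul_mem_of_eventually
      (eventually_add_smul_mem_of_mem_section hK hKc hv hproj hext hq)
    have hpos : 0 < h + δ * (ρ / 2) := by positivity
    refine ⟨d + δ • v, Finset.mem_union_left _ (Finset.mem_image_of_mem _ hd),
      ρ / 2 * h / (h + δ * (ρ / 2)), by positivity, ?_⟩
    convert hK.combo_interior_self_mem_interior hqd hqh (a := h / (h + δ * (ρ / 2)))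
      (b := δ * (ρ / 2) / (h + δ * (ρ / 2))) (by positivity) (by positivity) (by field_simp) using 1
    rw [hxq, hσ, zero_smul, add_zero]
    match_scalars <;> field_simp
  · obtain ⟨d, hd, hqd⟩ := hill (σ / δ) ⟨by positivity, by rwa [abs_of_pos hσ] at hσρ⟩ q hq
    refine ⟨d - δ • v, Finset.mem_union_right _ (Finset.mem_image_of_mem _ hd), σ / δ,
      by positivity, ?_⟩
    convert hqd using 1
    rw [hxq, smul_sub, smul_smul, div_mul_cancel₀ _ hδ.ne']
    module

end Illumination

theorem stmt16_general (n : ℕ) (hn : 3 ≤ n) (K : Set (Fin n → ℝ))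
    (hK : IsConvexBody K) (v : Fin n → ℝ) (hv : v ≠ 0) (c : ℝ)
    (H : Set (Fin n → ℝ)) (hH : H = {x | ∑ i, x i * v i = c})
    (hproj :
      (fun x => x - (((∑ i, x i * v i) - c) / (∑ i, v i * v i)) • v) '' K
        = K ∩ H)
    (hext : Set.extremePoints ℝ K ∩ H = ∅)
    (D : Finset (Fin n → ℝ))
    (hD0 : ∀ d ∈ D, d ≠ 0)
    (hDill : ∀ p ∈ intrinsicFrontier ℝ (K ∩ H), ∃ d ∈ D, ∃ ε : ℝ, 0 < ε ∧
      p + ε • d ∈ intrinsicInterior ℝ (K ∩ H)) :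
    (∃ D' : Finset (Fin n → ℝ), (∀ d ∈ D', d ≠ 0) ∧ D'.card ≤ 2 * D.card ∧
      IlluminatesSet K ↑D') ∧
    illumNumber K ≤ 2 * relIllumNumber (K ∩ H) := by
  classical
  obtain ⟨hKconv, hKcomp, hKint⟩ := hK
  subst hH
  let φ : StrongDual ℝ (Fin n → ℝ) :=
    LinearMap.toContinuousLinearMap ((dotProductBilin ℝ ℝ).flip v)
  have hE : 2 ≤ finrank ℝ (Fin n → ℝ) := by rw [Module.finrank_fin_fun]; omega
  have hφv : φ v ≠ 0 := fun h => hv (dotProduct_self_eq_zero.mp h)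
  have hproj' : ∀ x ∈ K, obliqueProj φ v c x ∈ K :=
    fun x hx => (hproj.subset (mem_image_of_mem _ hx)).1
  have hext' : ∀ x ∈ K.extremePoints ℝ, φ x ≠ c :=
    fun x hx hxc => eq_empty_iff_forall_notMem.mp hext x ⟨hx, hxc⟩
  refine ⟨exists_illuminating_finset_of_section hE hKconv hKcomp hKint hφv hproj' hext' hDill, ?_⟩
  obtain ⟨D₀, hD₀card, -, hD₀⟩ : relIllumNumber (K ∩ {x | φ x = c}) ∈ _ :=
    Nat.sInf_mem ⟨D.card, D, rfl, hD0, hDill⟩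
  obtain ⟨D', hD'0, hD'card, hD'⟩ :=
    exists_illuminating_finset_of_section hE hKconv hKcomp hKint hφv hproj' hext' hD₀
  calc illumNumber K ≤ D'.card := Nat.sInf_le ⟨D', rfl, hD'0, hD'⟩
    _ ≤ 2 * relIllumNumber (K ∩ {x | ∑ i, x i * v i = c}) := hD₀card ▸ hD'card

/-- Let `K` be a convex body in `ℝ^n`, `n ≥ 3`, and let `H` be the
affine hyperplane `{x | ⟨x, v⟩ = c}` (`v ≠ 0`). If the projection of `K` onto `H`
along the normal `v` equals `K ∩ H`, and `K` has no extreme points in `H`, then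
from any finite set `D` of nonzero directions parallel to `H` that illuminates
`K ∩ H` relative to `H`, one obtains a set of at most `2|D|` nonzero directions
illuminating `K`; in particular `𝕀(K) ≤ 2·𝕀(K ∩ H)`. -/
theorem stmt16 (n : ℕ) (hn : 3 ≤ n) (K : Set (Fin n → ℝ))
    (hK : IsConvexBody K) (v : Fin n → ℝ) (hv : v ≠ 0) (c : ℝ)
    (H : Set (Fin n → ℝ)) (hH : H = {x | ∑ i, x i * v i = c})
    (hproj :
      (fun x => x - (((∑ i, x i * v i) - c) / (∑ i, v i * v i)) • v) '' K
        = K ∩ H)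
    (hext : Set.extremePoints ℝ K ∩ H = ∅)
    (D : Finset (Fin n → ℝ))
    (hD0 : ∀ d ∈ D, d ≠ 0)
    (hDpar : ∀ d ∈ D, ∑ i, d i * v i = 0)
    (hDill : ∀ p ∈ intrinsicFrontier ℝ (K ∩ H), ∃ d ∈ D, ∃ ε : ℝ, 0 < ε ∧
      p + ε • d ∈ intrinsicInterior ℝ (K ∩ H)) :
    (∃ D' : Finset (Fin n → ℝ), (∀ d ∈ D', d ≠ 0) ∧ D'.card ≤ 2 * D.card ∧
      IlluminatesSet K ↑D') ∧
    illumNumber K ≤ 2 * relIllumNumber (K ∩ H) :=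
  stmt16_general n hn K hK v hv c H hH hproj hext D hD0 hDill
end
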